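/- arXiv:2403.06571 — 11 statements merged into one kernel-verified Lean document; each statement's English description precedes it below -/
import Mathlib

section
/- For any probability distributions d (for π) and d_p over a countable set S, any function g: S → [0,B], and any ε > 0, if Ψ := Σ_{s∈S} d(s)² / (d_p(s) + ε·d(s)) is finite, then Σ_{s∈S} d(s)·g(s) ≤ 2·√(Ψ · Σ_{s∈S} d_p(s)·g(s)²) + Ψ·ε·B. -/
/-- Cauchy–Schwarz for tsums of nonnegative reals. -/
lemma tsum_cauchy_schwarz {ι : Type*} (a b : ι → ℝ)
    (ha0 : ∀ i, 0 ≤ a i) (hb0 : ∀ i, 0 ≤ b i)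
    (ha : Summable (fun i => a i ^ 2)) (hb : Summable (fun i => b i ^ 2))
    (hab : Summable (fun i => a i * b i)) :
    (∑' i, a i * b i) ^ 2 ≤ (∑' i, a i ^ 2) * (∑' i, b i ^ 2) := by
  set P := ∑' i, a i ^ 2
  set Q := ∑' i, b i ^ 2
  have hP : 0 ≤ P := tsum_nonneg fun i => sq_nonneg _
  have hQ : 0 ≤ Q := tsum_nonneg fun i => sq_nonneg _
  have key : ∑' i, a i * b i ≤ Real.sqrt (P * Q) := by
    refine Summable.tsum_le_of_sum_le hab fun F => ?_
    have h1 : (∑ i ∈ F, a i * b i) ^ 2 ≤ (∑ i ∈ F, a i ^ 2) * ∑ i ∈ F, b i ^ 2 :=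
      Finset.sum_mul_sq_le_sq_mul_sq F a b
    have h2 : (∑ i ∈ F, a i ^ 2) * ∑ i ∈ F, b i ^ 2 ≤ P * Q :=
      mul_le_mul (Summable.sum_le_tsum F (fun i _ => sq_nonneg _) ha)
        (Summable.sum_le_tsum F (fun i _ => sq_nonneg _) hb)
        (Finset.sum_nonneg fun i _ => sq_nonneg _) hP
    have h3 : 0 ≤ ∑ i ∈ F, a i * b i :=
      Finset.sum_nonneg fun i _ => mul_nonneg (ha0 i) (hb0 i)
    nlinarith [Real.sq_sqrt (mul_nonneg hP hQ), Real.sqrt_nonneg (P * Q)]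
  have h0 : 0 ≤ ∑' i, a i * b i := tsum_nonneg fun i => mul_nonneg (ha0 i) (hb0 i)
  calc (∑' i, a i * b i) ^ 2 ≤ Real.sqrt (P * Q) ^ 2 := by
        exact pow_le_pow_left₀ h0 key 2
    _ = P * Q := Real.sq_sqrt (mul_nonneg hP hQ)

/-- Change-of-measure lemma for L1-coverage. -/
theorem l1_coverage_change_of_measure {S : Type*} [Countable S]
    (d dp g : S → ℝ) (B ε : ℝ)
    (hd0 : ∀ s, 0 ≤ d s) (hdp0 : ∀ s, 0 ≤ dp s)
    (hd : Summable d) (hdp : Summable dp)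
    (hdsum : ∑' s, d s = 1) (hdpsum : ∑' s, dp s = 1)
    (hg : ∀ s, g s ∈ Set.Icc (0 : ℝ) B) (hε : 0 < ε)
    (hΨ : Summable fun s => d s ^ 2 / (dp s + ε * d s)) :
    ∑' s, d s * g s ≤
      2 * Real.sqrt ((∑' s, d s ^ 2 / (dp s + ε * d s)) * ∑' s, dp s * g s ^ 2) +
        (∑' s, d s ^ 2 / (dp s + ε * d s)) * ε * B := by
  have hg0 : ∀ s, 0 ≤ g s := fun s => (hg s).1
  have hgB : ∀ s, g s ≤ B := fun s => (hg s).2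
  have hne : Nonempty S := by
    by_contra h
    rw [not_nonempty_iff] at h
    rw [tsum_empty] at hdsum
    norm_num at hdsum
  have hB : 0 ≤ B := le_trans (hg0 (Classical.arbitrary _)) (hgB _)
  set c : S → ℝ := fun s => dp s + ε * d s with hc
  have hc0 : ∀ s, 0 ≤ c s := fun s => add_nonneg (hdp0 s) (mul_nonneg hε.le (hd0 s))
  set a : S → ℝ := fun s => d s / Real.sqrt (c s) with ha
  set b : S → ℝ := fun s => Real.sqrt (c s) * g s with hb
  have ha2 : ∀ s, a s ^ 2 = d s ^ 2 / c s := by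
    intro s
    simp only [ha, div_pow, Real.sq_sqrt (hc0 s)]
  have hb2 : ∀ s, b s ^ 2 = dp s * g s ^ 2 + ε * (d s * g s ^ 2) := by
    intro s
    simp only [hb, mul_pow, Real.sq_sqrt (hc0 s), hc]
    rw [Real.sq_sqrt (add_nonneg (hdp0 s) (mul_nonneg hε.le (hd0 s)))]
    ring
  have hab : ∀ s, a s * b s = d s * g s := by
    intro s
    rcases eq_or_lt_of_le (hc0 s) with h0 | h0
    · have hds : d s = 0 := by
        have h1 : ε * d s ≤ c s := le_add_of_nonneg_left (hdp0 s)
        nlinarith [hd0 s, mul_nonneg hε.le (hd0 s)]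
      simp [ha, hb, hds]
    · have hs : Real.sqrt (c s) ≠ 0 := by positivity
      simp only [ha, hb]; rw [div_mul_eq_mul_div, mul_left_comm, mul_div_right_comm, div_self hs]
      ring
  -- summability facts
  have hsdg : Summable (fun s => d s * g s) := by
    refine Summable.of_nonneg_of_le (fun s => mul_nonneg (hd0 s) (hg0 s))
      (fun s => ?_) (hd.mul_left B)
    calc d s * g s ≤ d s * B := mul_le_mul_of_nonneg_left (hgB s) (hd0 s)
      _ = B * d s := mul_comm _ _
  have hsdg2 : Summable (fun s => d s * g s ^ 2) := by
    refine Summable.of_nonneg_of_le (fun s => mul_nonneg (hd0 s) (sq_nonneg _))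
      (fun s => ?_) (hsdg.mul_left B)
    have : g s ^ 2 ≤ B * g s := by nlinarith [hg0 s, hgB s]
    nlinarith [hd0 s]
  have hsdpg2 : Summable (fun s => dp s * g s ^ 2) := by
    refine Summable.of_nonneg_of_le (fun s => mul_nonneg (hdp0 s) (sq_nonneg _))
      (fun s => ?_) (hdp.mul_left (B ^ 2))
    have : g s ^ 2 ≤ B ^ 2 := by nlinarith [hg0 s, hgB s]
    nlinarith [hdp0 s]
  have hsa2 : Summable (fun s => a s ^ 2) := by
    simpa only [ha2] using hΨ
  have hsb2 : Summable (fun s => b s ^ 2) := by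
    simp only [hb2]
    exact hsdpg2.add (hsdg2.mul_left ε)
  have hsab : Summable (fun s => a s * b s) := by
    simpa only [hab] using hsdg
  set Ψ := ∑' s, d s ^ 2 / (dp s + ε * d s) with hΨdef
  set A := ∑' s, dp s * g s ^ 2 with hAdef
  set X := ∑' s, d s * g s with hXdef
  have hΨ0 : 0 ≤ Ψ := tsum_nonneg fun s => div_nonneg (sq_nonneg _) (hc0 s)
  have hA0 : 0 ≤ A := tsum_nonneg fun s => mul_nonneg (hdp0 s) (sq_nonneg _)
  have hX0 : 0 ≤ X := tsum_nonneg fun s => mul_nonneg (hd0 s) (hg0 s)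
  have hCS : X ^ 2 ≤ Ψ * (∑' s, b s ^ 2) := by
    have := tsum_cauchy_schwarz a b
      (fun s => div_nonneg (hd0 s) (Real.sqrt_nonneg _))
      (fun s => mul_nonneg (Real.sqrt_nonneg _) (hg0 s)) hsa2 hsb2 hsab
    have h1 : ∑' s, a s * b s = X := tsum_congr hab
    have h2 : ∑' s, a s ^ 2 = Ψ := tsum_congr ha2
    rwa [h1, h2] at this
  have hQb : ∑' s, b s ^ 2 ≤ A + ε * (B * X) := by
    have h1 : ∑' s, b s ^ 2 = A + ε * ∑' s, d s * g s ^ 2 := by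
      simp only [hb2]
      rw [Summable.tsum_add hsdpg2 (hsdg2.mul_left ε), tsum_mul_left]
    rw [h1]
    have h2 : ∑' s, d s * g s ^ 2 ≤ B * X := by
      rw [hXdef, ← tsum_mul_left]
      refine Summable.tsum_le_tsum (fun s => ?_) hsdg2 (hsdg.mul_left B)
      nlinarith [mul_nonneg (hd0 s) (mul_nonneg (sub_nonneg.2 (hgB s)) (hg0 s))]
    nlinarith
  have hkey : X ^ 2 ≤ Ψ * A + Ψ * ε * B * X := by
    calc X ^ 2 ≤ Ψ * (∑' s, b s ^ 2) := hCS
      _ ≤ Ψ * (A + ε * (B * X)) := mul_le_mul_of_nonneg_left hQb hΨ0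
      _ = Ψ * A + Ψ * ε * B * X := by ring
  set r := Real.sqrt (Ψ * A) with hr
  have hr0 : 0 ≤ r := Real.sqrt_nonneg _
  have hr2 : r ^ 2 = Ψ * A := Real.sq_sqrt (mul_nonneg hΨ0 hA0)
  have ht0 : 0 ≤ Ψ * ε * B := mul_nonneg (mul_nonneg hΨ0 hε.le) hB
  nlinarith [sq_nonneg (X - r - Ψ * ε * B), sq_nonneg (X - r), mul_nonneg hr0 ht0]
end

section
/- Let d¹, ..., d^T be probability distributions over a countable set Z, and let μ be a probability distribution on Z such that dᵗ(z)/μ(z) ≤ C for all z ∈ Z and t ∈ [T] (with C ≥ 1). Then for every z ∈ Z with μ(z) > 0, Σ_{t=1}^T dᵗ(z) / (Σ_{i<t} dⁱ(z) + C·μ(z)) ≤ 2·log(2T). -/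
/-- Per-element elliptic potential lemma. -/
theorem elliptic_potential {Z : Type*} [Countable Z] (T : ℕ)
    (d : ℕ → Z → ℝ) (μ : Z → ℝ) (C : ℝ)
    (hd0 : ∀ t z, 0 ≤ d t z) (hdsum : ∀ t, HasSum (d t) 1)
    (hμ0 : ∀ z, 0 ≤ μ z) (hμsum : HasSum μ 1) (hC : 1 ≤ C)
    (hcov : ∀ t < T, ∀ z, d t z ≤ C * μ z) :
    ∀ z, 0 < μ z →
      ∑ t ∈ Finset.range T, d t z / (∑ i ∈ Finset.range t, d i z + C * μ z) ≤
        2 * Real.log (2 * T) := by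
  intro z hz
  rcases Nat.eq_zero_or_pos T with hT | hT
  · simp [hT]
  set m := C * μ z with hm
  have hm0 : 0 < m := mul_pos (lt_of_lt_of_le one_pos hC) hz
  set a : ℕ → ℝ := fun t => d t z with ha
  set S : ℕ → ℝ := fun t => ∑ i ∈ Finset.range t, a i + m with hS
  have hsum_nn : ∀ t, (0:ℝ) ≤ ∑ i ∈ Finset.range t, a i :=
    fun t => Finset.sum_nonneg fun i _ => hd0 i z
  have hSpos : ∀ t, 0 < S t := fun t => add_pos_of_nonneg_of_pos (hsum_nn t) hm0
  have key : ∀ t < T, a t / S t ≤ 2 * (Real.log (S (t+1)) - Real.log (S t)) := by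
    intro t ht
    have hat0 : 0 ≤ a t := hd0 t z
    have hatm : a t ≤ m := hcov t ht z
    have hSsucc : S (t+1) = S t + a t := by
      simp only [hS, Finset.sum_range_succ]; ring
    set r := a t / S t with hr
    have hr0 : 0 ≤ r := div_nonneg hat0 (hSpos t).le
    have hr1 : r ≤ 1 := by
      rw [hr, div_le_one (hSpos t)]
      calc a t ≤ m := hatm
        _ ≤ S t := le_add_of_nonneg_left (hsum_nn t)
    have h1r : (0:ℝ) < 1 + r := by linarith
    have hlog : Real.log (S (t+1)) - Real.log (S t) = Real.log (1 + r) := by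
      rw [← Real.log_div (hSpos (t+1)).ne' (hSpos t).ne', hSsucc]
      congr 1
      rw [add_div, div_self (hSpos t).ne']
    have hlb : 1 - (1 + r)⁻¹ ≤ Real.log (1 + r) := by
      have := Real.log_le_sub_one_of_pos (x := (1 + r)⁻¹) (by positivity)
      rw [Real.log_inv] at this
      linarith
    have heq : 1 - (1 + r)⁻¹ = r / (1 + r) := by field_simp; ring
    have hdiv : r / 2 ≤ r / (1 + r) := by
      apply div_le_div_of_nonneg_left hr0 h1r (by linarith)
    have : r / 2 ≤ Real.log (1 + r) := by
      rw [heq] at hlb; linarith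
    rw [hlog]
    linarith
  calc ∑ t ∈ Finset.range T, a t / S t
      ≤ ∑ t ∈ Finset.range T, 2 * (Real.log (S (t+1)) - Real.log (S t)) :=
        Finset.sum_le_sum fun t ht => key t (Finset.mem_range.mp ht)
    _ = 2 * (Real.log (S T) - Real.log (S 0)) := by
        rw [← Finset.mul_sum, Finset.sum_range_sub (fun t => Real.log (S t))]
    _ ≤ 2 * Real.log (2 * T) := by
        have hS0 : S 0 = m := by simp [hS]
        have hST : S T ≤ (T + 1) * m := by
          have : ∑ i ∈ Finset.range T, a i ≤ ∑ i ∈ Finset.range T, m :=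
            Finset.sum_le_sum fun i hi => hcov i (Finset.mem_range.mp hi) z
          simp only [Finset.sum_const, Finset.card_range, nsmul_eq_mul] at this
          simp only [hS]
          push_cast
          linarith
        have hlog1 : Real.log (S T) - Real.log (S 0) = Real.log (S T / m) := by
          rw [hS0, Real.log_div (hSpos T).ne' hm0.ne']
        rw [hlog1]
        have h2T : (S T) / m ≤ 2 * T := by
          rw [div_le_iff₀ hm0]
          have hT1 : (T:ℝ) + 1 ≤ 2 * T := by
            have : (1:ℝ) ≤ T := by exact_mod_cast hT
            linarith
          nlinarith
        have := Real.log_le_log (div_pos (hSpos T) hm0) h2T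
        linarith
end

section
/- Let Z be a countable set, d¹,...,d^T ∈ Δ(Z) distributions, μ ∈ Δ(Z) with sup_z dᵗ(z)/μ(z) ≤ C for all t, and g¹,...,g^T: Z → [-B, B]. Then Σ_{t=1}^T E_{z∼dᵗ}[gᵗ(z)] ≤ √(2C·log(2T) · Σ_{t=1}^T Σ_{i<t} E_{z∼dⁱ}[(gᵗ(z))²]) + 2·C·B. -/
open Finset

lemma half_le_log_one_add {r : ℝ} (h0 : 0 ≤ r) (h1 : r ≤ 1) :
    r ≤ 2 * Real.log (1 + r) := by
  have hpos : (0:ℝ) < 1 + r := by linarith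
  have hexp : Real.exp (r / 2) ≤ 1 + r := by
    have h2 : 1 - r / 2 ≤ Real.exp (-(r / 2)) := by
      have := Real.add_one_le_exp (-(r / 2)); linarith
    have hE : Real.exp (r / 2) * Real.exp (-(r / 2)) = 1 := by
      rw [← Real.exp_add]; simp
    nlinarith [Real.exp_pos (r / 2), Real.exp_pos (-(r / 2))]
  have := (Real.le_log_iff_exp_le hpos).mpr hexp
  linarith

lemma potential_aux (T : ℕ) (hT : 1 ≤ T) (e : ℕ → ℝ) (c : ℝ) (hc : 0 ≤ c)
    (h0 : ∀ t < T, 0 ≤ e t) (hle : ∀ t < T, e t ≤ c) :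
    ∑ t ∈ range T, (if c ≤ ∑ i ∈ range t, e i then e t ^ 2 / ∑ i ∈ range t, e i else 0)
      ≤ 2 * c * Real.log (2 * T) := by
  classical
  have hT1 : (1:ℝ) ≤ (T:ℝ) := by exact_mod_cast hT
  have hlog2T : 0 ≤ Real.log (2 * T) := Real.log_nonneg (by linarith)
  set M : ℕ → ℝ := fun t => ∑ i ∈ range t, e i with hM
  have hMmono : ∀ s t, s ≤ t → t ≤ T → M s ≤ M t := by
    intro s t hst htT
    exact Finset.sum_le_sum_of_subset_of_nonneg (Finset.range_subset_range.mpr hst)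
      (fun i hi _ => h0 i (lt_of_lt_of_le (Finset.mem_range.mp hi) htT))
  rcases eq_or_lt_of_le hc with hc0 | hcpos
  · -- c = 0
    have : ∀ t ∈ range T, (if c ≤ M t then e t ^ 2 / M t else 0) = 0 := by
      intro t ht
      have ht' := Finset.mem_range.mp ht
      have he : e t = 0 := le_antisymm (by rw [hc0]; exact hle t ht') (h0 t ht')
      split_ifs with h
      · simp [he]
      · rfl
    rw [Finset.sum_congr rfl this]
    simp [← hc0]
  · by_cases hex : ∃ t, t < T ∧ c ≤ M t
    · set τ := Nat.find hex with hτdef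
      obtain ⟨hτT, hτc⟩ : τ < T ∧ c ≤ M τ := Nat.find_spec hex
      have hmin : ∀ m, m < τ → ¬ c ≤ M m := by
        intro m hm hcm
        exact Nat.find_min hex hm ⟨hm.trans hτT, hcm⟩
      rw [← Finset.sum_range_add_sum_Ico _ (le_of_lt hτT)]
      have hfirst : ∑ t ∈ range τ, (if c ≤ M t then e t ^ 2 / M t else 0) = 0 :=
        Finset.sum_eq_zero fun t ht => if_neg (hmin t (Finset.mem_range.mp ht))
      rw [hfirst, zero_add]
      set L : ℕ → ℝ := fun t => Real.log (M t) with hL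
      have hbound : ∀ t ∈ Finset.Ico τ T, (if c ≤ M t then e t ^ 2 / M t else 0)
          ≤ 2 * c * (L (t + 1) - L t) := by
        intro t ht
        obtain ⟨hτt, htT⟩ := Finset.mem_Ico.mp ht
        have hMt : c ≤ M t := le_trans hτc (hMmono τ t hτt htT.le)
        have hMtpos : 0 < M t := lt_of_lt_of_le hcpos hMt
        have het0 : 0 ≤ e t := h0 t htT
        have hetc : e t ≤ c := hle t htT
        have hMsucc : M (t + 1) = M t + e t := by
          simp only [hM]; rw [Finset.sum_range_succ]
        rw [if_pos hMt]
        have hr : e t / M t ≤ 2 * Real.log (1 + e t / M t) :=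
          half_le_log_one_add (div_nonneg het0 hMtpos.le)
            ((div_le_one hMtpos).mpr (hetc.trans hMt))
        have h1r : 1 + e t / M t = M (t + 1) / M t := by
          rw [hMsucc]; field_simp
        have hM1pos : 0 < M (t + 1) := by rw [hMsucc]; linarith
        have hlogeq : Real.log (1 + e t / M t) = L (t + 1) - L t := by
          rw [h1r, Real.log_div hM1pos.ne' hMtpos.ne']
        rw [hlogeq] at hr
        have : e t ^ 2 / M t = e t * (e t / M t) := by field_simp
        rw [this]
        calc e t * (e t / M t) ≤ c * (e t / M t) :=
              mul_le_mul_of_nonneg_right hetc (div_nonneg het0 hMtpos.le)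
          _ ≤ c * (2 * (L (t + 1) - L t)) := mul_le_mul_of_nonneg_left hr hc
          _ = 2 * c * (L (t + 1) - L t) := by ring
      calc ∑ t ∈ Finset.Ico τ T, (if c ≤ M t then e t ^ 2 / M t else 0)
          ≤ ∑ t ∈ Finset.Ico τ T, 2 * c * (L (t + 1) - L t) := Finset.sum_le_sum hbound
        _ = 2 * c * (L T - L τ) := by
            rw [← Finset.mul_sum]
            congr 1
            rw [Finset.sum_Ico_eq_sub _ (le_of_lt hτT), Finset.sum_range_sub,
              Finset.sum_range_sub]
            ring
        _ ≤ 2 * c * Real.log (2 * T) := by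
            apply mul_le_mul_of_nonneg_left _ (by linarith)
            have hMT : M T ≤ T * c :=
              calc M T = ∑ i ∈ range T, e i := rfl
                _ ≤ ∑ _i ∈ range T, c := Finset.sum_le_sum fun i hi =>
                    hle i (Finset.mem_range.mp hi)
                _ = T * c := by rw [Finset.sum_const, Finset.card_range, nsmul_eq_mul]
            have hMTpos : 0 < M T := lt_of_lt_of_le hcpos (le_trans hτc (hMmono τ T hτT.le le_rfl))
            have hLT : L T ≤ Real.log (T * c) := Real.log_le_log hMTpos hMT
            have hLτ : Real.log c ≤ L τ := Real.log_le_log hcpos hτc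
            have hTpos : (0:ℝ) < T := by linarith
            have hlogmul : Real.log ((T:ℝ) * c) = Real.log T + Real.log c :=
              Real.log_mul hTpos.ne' hcpos.ne'
            have hlogT : Real.log (T:ℝ) ≤ Real.log (2 * T) :=
              Real.log_le_log hTpos (by linarith)
            simp only [hL] at hLT hLτ ⊢
            linarith
    · push_neg at hex
      have : ∀ t ∈ range T, (if c ≤ M t then e t ^ 2 / M t else 0) = 0 :=
        fun t ht => if_neg (not_le.mpr (hex t (Finset.mem_range.mp ht)))
      rw [Finset.sum_congr rfl this, Finset.sum_const, smul_zero]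
      positivity

lemma burnin_aux (T : ℕ) (e : ℕ → ℝ) (c : ℝ) (hc : 0 ≤ c)
    (h0 : ∀ t < T, 0 ≤ e t) (hle : ∀ t < T, e t ≤ c) :
    ∑ t ∈ range T, (if c ≤ ∑ i ∈ range t, e i then 0 else e t) ≤ 2 * c := by
  classical
  set M : ℕ → ℝ := fun t => ∑ i ∈ range t, e i with hM
  have key : ∑ t ∈ range T, (if c ≤ M t then 0 else e t)
      = ∑ t ∈ (range T).filter (fun t => ¬ c ≤ M t), e t := by
    rw [Finset.sum_filter]
    apply Finset.sum_congr rfl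
    intro t _
    by_cases h : c ≤ M t <;> simp [h]
  rw [key]
  set S := (range T).filter (fun t => ¬ c ≤ M t) with hS
  rcases S.eq_empty_or_nonempty with hSe | hSne
  · rw [hSe, Finset.sum_empty]; linarith
  · set t' := S.max' hSne with ht'
    have ht'S : t' ∈ S := S.max'_mem hSne
    have ht'T : t' < T := Finset.mem_range.mp (Finset.mem_filter.mp ht'S).1
    have hMt' : ¬ c ≤ M t' := (Finset.mem_filter.mp ht'S).2
    have hsub : S ⊆ range (t' + 1) := by
      intro t htS
      exact Finset.mem_range.mpr (Nat.lt_succ_of_le (S.le_max' t htS))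
    calc ∑ t ∈ S, e t ≤ ∑ t ∈ range (t' + 1), e t :=
          Finset.sum_le_sum_of_subset_of_nonneg hsub (fun i hi _ =>
            h0 i (lt_of_lt_of_le (Finset.mem_range.mp hi) ht'T))
      _ = M t' + e t' := by rw [Finset.sum_range_succ]
      _ ≤ c + c := add_le_add (le_of_not_ge hMt') (hle t' ht'T)
      _ = 2 * c := by ring

lemma lambda_trick (A U V : ℝ) (hU : 0 ≤ U) (hV : 0 ≤ V)
    (h : ∀ l : ℝ, 0 < l → A ≤ U / (2 * l) + l * V / 2) : A ≤ Real.sqrt (U * V) := by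
  rcases le_or_gt A 0 with hA | hA
  · exact hA.trans (Real.sqrt_nonneg _)
  rcases eq_or_lt_of_le hU with hU0 | hU0
  · rcases eq_or_lt_of_le hV with hV0 | hV0
    · exfalso
      have := h 1 one_pos
      rw [← hU0, ← hV0] at this
      norm_num at this
      linarith
    · exfalso
      have := h (A / V) (div_pos hA hV0)
      rw [← hU0] at this
      have heq : A / V * V / 2 = A / 2 := by field_simp
      rw [zero_div, zero_add, heq] at this
      linarith
  rcases eq_or_lt_of_le hV with hV0 | hV0
  · exfalso
    have := h (U / A) (div_pos hU0 hA)
    rw [← hV0] at this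
    have heq : U / (2 * (U / A)) = A / 2 := by
      field_simp
    rw [mul_zero, zero_div, add_zero, heq] at this
    linarith
  · have hsu : 0 < Real.sqrt U := Real.sqrt_pos.mpr hU0
    have hsv : 0 < Real.sqrt V := Real.sqrt_pos.mpr hV0
    have hsU : Real.sqrt U * Real.sqrt U = U := Real.mul_self_sqrt hU
    have hsV : Real.sqrt V * Real.sqrt V = V := Real.mul_self_sqrt hV
    have key := h (Real.sqrt U / Real.sqrt V) (div_pos hsu hsv)
    have h1 : U / (2 * (Real.sqrt U / Real.sqrt V)) = Real.sqrt U * Real.sqrt V / 2 := by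
      field_simp
      linear_combination (-1) * hsU
    have h2 : Real.sqrt U / Real.sqrt V * V / 2 = Real.sqrt U * Real.sqrt V / 2 := by
      field_simp
      linear_combination (-1) * hsV
    rw [h1, h2] at key
    rw [Real.sqrt_mul hU]
    linarith

/-- L∞-coverability potential lemma: cumulative on-policy expectations are bounded by
historical second moments plus a burn-in term. -/
theorem linf_coverability_potential {Z : Type*} [Countable Z] (T : ℕ)
    (d : ℕ → Z → ℝ) (μ : Z → ℝ) (g : ℕ → Z → ℝ) (C B : ℝ)
    (hd0 : ∀ t z, 0 ≤ d t z) (hdsum : ∀ t, HasSum (d t) 1)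
    (hμ0 : ∀ z, 0 ≤ μ z) (hμsum : HasSum μ 1)
    (hC : 0 ≤ C) (hB : 0 ≤ B)
    (hcov : ∀ t < T, ∀ z, d t z ≤ C * μ z)
    (hg : ∀ t < T, ∀ z, |g t z| ≤ B) :
    ∑ t ∈ Finset.range T, ∑' z, d t z * g t z ≤
      Real.sqrt (2 * C * Real.log (2 * T) *
        ∑ t ∈ Finset.range T, ∑ i ∈ Finset.range t, ∑' z, d i z * g t z ^ 2) +
      2 * C * B := by
  classical
  rcases Nat.eq_zero_or_pos T with hT0 | hT
  · subst hT0
    simp only [Finset.range_zero, Finset.sum_empty, mul_zero, Real.sqrt_zero, zero_add]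
    have h1 : (0:ℝ) ≤ 2 * C * B := by positivity
    linarith
  have hT1 : (1:ℝ) ≤ (T:ℝ) := by exact_mod_cast hT
  have hlog2T : 0 ≤ Real.log (2 * T) := Real.log_nonneg (by linarith)
  have hds : ∀ t, Summable (d t) := fun t => (hdsum t).summable
  set M : ℕ → Z → ℝ := fun t z => ∑ i ∈ Finset.range t, d i z with hMdef
  have hM0 : ∀ t z, 0 ≤ M t z := fun t z => Finset.sum_nonneg fun i _ => hd0 i z
  set a : ℕ → Z → ℝ := fun t z => if C * μ z ≤ M t z then d t z * |g t z| else 0 with hadef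
  set b : ℕ → Z → ℝ := fun t z => if C * μ z ≤ M t z then 0 else d t z * |g t z| with hbdef
  set u : ℕ → Z → ℝ := fun t z => if C * μ z ≤ M t z then d t z ^ 2 / M t z else 0 with hudef
  set v : ℕ → Z → ℝ := fun t z => M t z * g t z ^ 2 with hvdef
  -- summability facts
  have hdg_abs_sum : ∀ t, t < T → Summable (fun z => d t z * |g t z|) := fun t ht =>
    Summable.of_nonneg_of_le (fun z => mul_nonneg (hd0 t z) (abs_nonneg _))
      (fun z => mul_le_mul_of_nonneg_left (hg t ht z) (hd0 t z)) ((hds t).mul_right B)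
  have hdg_sum : ∀ t, t < T → Summable (fun z => d t z * g t z) := fun t ht =>
    Summable.of_abs ((hdg_abs_sum t ht).congr fun z => by
      rw [abs_mul, abs_of_nonneg (hd0 t z)])
  have ha_nonneg : ∀ t z, 0 ≤ a t z := by
    intro t z; simp only [hadef]
    split_ifs
    · exact mul_nonneg (hd0 t z) (abs_nonneg _)
    · exact le_rfl
  have hb_nonneg : ∀ t z, 0 ≤ b t z := by
    intro t z; simp only [hbdef]
    split_ifs
    · exact le_rfl
    · exact mul_nonneg (hd0 t z) (abs_nonneg _)
  have ha_le : ∀ t z, a t z ≤ d t z * |g t z| := by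
    intro t z; simp only [hadef]
    split_ifs
    · exact le_rfl
    · exact mul_nonneg (hd0 t z) (abs_nonneg _)
  have hb_le : ∀ t z, b t z ≤ d t z * |g t z| := by
    intro t z; simp only [hbdef]
    split_ifs
    · exact mul_nonneg (hd0 t z) (abs_nonneg _)
    · exact le_rfl
  have ha_sum : ∀ t, t < T → Summable (a t) := fun t ht =>
    Summable.of_nonneg_of_le (ha_nonneg t) (ha_le t) (hdg_abs_sum t ht)
  have hb_sum : ∀ t, t < T → Summable (b t) := fun t ht =>
    Summable.of_nonneg_of_le (hb_nonneg t) (hb_le t) (hdg_abs_sum t ht)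
  have hu_nonneg : ∀ t z, 0 ≤ u t z := by
    intro t z; simp only [hudef]
    split_ifs
    · exact div_nonneg (sq_nonneg _) (hM0 t z)
    · exact le_rfl
  have hu_le : ∀ t, t < T → ∀ z, u t z ≤ d t z := by
    intro t ht z; simp only [hudef]
    split_ifs with h
    · rcases eq_or_lt_of_le (hM0 t z) with hM | hM
      · rw [← hM, div_zero]; exact hd0 t z
      · rw [div_le_iff₀ hM]
        nlinarith [hd0 t z, hcov t ht z]
    · exact hd0 t z
  have hu_sum : ∀ t, t < T → Summable (u t) := fun t ht =>
    Summable.of_nonneg_of_le (hu_nonneg t) (hu_le t ht) (hds t)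
  have hg2 : ∀ t, t < T → ∀ z, g t z ^ 2 ≤ B ^ 2 := by
    intro t ht z
    have h1 := hg t ht z
    nlinarith [abs_nonneg (g t z), sq_abs (g t z)]
  have hdg2_sum : ∀ i, i < T → ∀ t, t < T → Summable (fun z => d i z * g t z ^ 2) := by
    intro i hi t ht
    exact Summable.of_nonneg_of_le (fun z => mul_nonneg (hd0 i z) (sq_nonneg _))
      (fun z => mul_le_mul_of_nonneg_left (hg2 t ht z) (hd0 i z)) ((hds i).mul_right (B ^ 2))
  have hv_eq : ∀ t z, v t z = ∑ i ∈ Finset.range t, d i z * g t z ^ 2 := by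
    intro t z; simp only [hvdef, hMdef]
    rw [Finset.sum_mul]
  have hv_nonneg : ∀ t z, 0 ≤ v t z := fun t z =>
    mul_nonneg (hM0 t z) (sq_nonneg _)
  have hv_sum : ∀ t, t < T → Summable (v t) := by
    intro t ht
    have : Summable (fun z => ∑ i ∈ Finset.range t, d i z * g t z ^ 2) :=
      summable_sum fun i hi => hdg2_sum i ((Finset.mem_range.mp hi).trans ht) t ht
    exact this.congr fun z => (hv_eq t z).symm
  -- Step A: split into main + burn-in
  have hLHS : ∑ t ∈ Finset.range T, ∑' z, d t z * g t z ≤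
      (∑ t ∈ Finset.range T, ∑' z, a t z) + ∑ t ∈ Finset.range T, ∑' z, b t z := by
    rw [← Finset.sum_add_distrib]
    apply Finset.sum_le_sum
    intro t ht'
    have ht := Finset.mem_range.mp ht'
    have h1 : ∑' z, d t z * g t z ≤ ∑' z, d t z * |g t z| :=
      Summable.tsum_le_tsum (fun z => mul_le_mul_of_nonneg_left (le_abs_self _) (hd0 t z))
        (hdg_sum t ht) (hdg_abs_sum t ht)
    have h2 : ∑' z, d t z * |g t z| = ∑' z, (a t z + b t z) := by
      apply tsum_congr
      intro z
      simp only [hadef, hbdef]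
      split_ifs <;> ring
    have h3 : ∑' z, (a t z + b t z) = ∑' z, a t z + ∑' z, b t z :=
      Summable.tsum_add (ha_sum t ht) (hb_sum t ht)
    linarith
  -- burn-in bound
  have hburn : ∑ t ∈ Finset.range T, ∑' z, b t z ≤ 2 * C * B := by
    set b' : ℕ → Z → ℝ := fun t z => if C * μ z ≤ M t z then 0 else d t z with hb'def
    have hb'_nonneg : ∀ t z, 0 ≤ b' t z := by
      intro t z; simp only [hb'def]
      split_ifs
      · exact le_rfl
      · exact hd0 t z
    have hb'_le : ∀ t z, b' t z ≤ d t z := by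
      intro t z; simp only [hb'def]
      split_ifs
      · exact hd0 t z
      · exact le_rfl
    have hb'_sum : ∀ t, Summable (b' t) := fun t =>
      Summable.of_nonneg_of_le (hb'_nonneg t) (hb'_le t) (hds t)
    have hbb' : ∀ t, t < T → ∀ z, b t z ≤ B * b' t z := by
      intro t ht z; simp only [hbdef, hb'def]
      split_ifs
      · simp
      · rw [mul_comm B]
        exact mul_le_mul_of_nonneg_left (hg t ht z) (hd0 t z)
    calc ∑ t ∈ Finset.range T, ∑' z, b t z
        ≤ ∑ t ∈ Finset.range T, ∑' z, B * b' t z :=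
          Finset.sum_le_sum fun t ht' =>
            Summable.tsum_le_tsum (hbb' t (Finset.mem_range.mp ht')) (hb_sum t (Finset.mem_range.mp ht'))
              ((hb'_sum t).mul_left B)
      _ = ∑' z, ∑ t ∈ Finset.range T, B * b' t z :=
          (Summable.tsum_finsetSum fun t _ => (hb'_sum t).mul_left B).symm
      _ ≤ ∑' z, 2 * C * B * μ z := by
          apply Summable.tsum_le_tsum _ (summable_sum fun t _ => (hb'_sum t).mul_left B)
            (hμsum.summable.mul_left (2 * C * B))
          intro z
          rw [← Finset.mul_sum]
          have hba := burnin_aux T (fun i => d i z) (C * μ z) (mul_nonneg hC (hμ0 z))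
            (fun t ht => hd0 t z) (fun t ht => hcov t ht z)
          have : ∑ t ∈ Finset.range T, b' t z
              ≤ 2 * (C * μ z) := by
            simpa only [hb'def, hMdef] using hba
          calc B * ∑ t ∈ Finset.range T, b' t z ≤ B * (2 * (C * μ z)) :=
                mul_le_mul_of_nonneg_left this hB
            _ = 2 * C * B * μ z := by ring
      _ = 2 * C * B := by rw [tsum_mul_left, hμsum.tsum_eq, mul_one]
  -- U and V
  set U := ∑ t ∈ Finset.range T, ∑' z, u t z with hUdef
  set V := ∑ t ∈ Finset.range T, ∑ i ∈ Finset.range t, ∑' z, d i z * g t z ^ 2 with hVdef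
  have hUnonneg : 0 ≤ U :=
    Finset.sum_nonneg fun t _ => tsum_nonneg (hu_nonneg t)
  have hVnonneg : 0 ≤ V :=
    Finset.sum_nonneg fun t _ => Finset.sum_nonneg fun i _ =>
      tsum_nonneg fun z => mul_nonneg (hd0 i z) (sq_nonneg _)
  have hVv : ∑ t ∈ Finset.range T, ∑' z, v t z = V := by
    rw [hVdef]
    apply Finset.sum_congr rfl
    intro t ht'
    have ht := Finset.mem_range.mp ht'
    rw [tsum_congr (hv_eq t)]
    exact Summable.tsum_finsetSum fun i hi => hdg2_sum i ((Finset.mem_range.mp hi).trans ht) t ht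
  -- Step C: lambda bound
  have hstepC : ∀ l : ℝ, 0 < l →
      (∑ t ∈ Finset.range T, ∑' z, a t z) ≤ U / (2 * l) + l * V / 2 := by
    intro l hl
    have point : ∀ t, t < T → ∀ z, a t z ≤ (2 * l)⁻¹ * u t z + (l / 2) * v t z := by
      intro t ht z
      simp only [hadef, hudef, hvdef]
      split_ifs with h
      · rcases eq_or_lt_of_le (hM0 t z) with hM | hM
        · have hd' : d t z = 0 :=
            le_antisymm (le_trans (hcov t ht z) (hM ▸ h)) (hd0 t z)
          rw [hd', ← hM]
          simp
        · have hgg : g t z ^ 2 = |g t z| ^ 2 := (sq_abs _).symm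
          have key : 2 * l * M t z * (d t z * |g t z|)
              ≤ d t z ^ 2 + l ^ 2 * M t z ^ 2 * |g t z| ^ 2 := by
            nlinarith [sq_nonneg (d t z - l * M t z * |g t z|)]
          have h1 : d t z * |g t z| - (l / 2) * (M t z * g t z ^ 2)
              ≤ (2 * l)⁻¹ * (d t z ^ 2 / M t z) := by
            rw [hgg, ← div_eq_inv_mul, div_div,
              le_div_iff₀ (by positivity : 0 < M t z * (2 * l))]
            nlinarith [key]
          linarith
      · have h2 : 0 ≤ (l / 2) * (M t z * g t z ^ 2) := by
          have := hM0 t z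
          positivity
        have h3 : ((2 * l)⁻¹ : ℝ) * 0 = 0 := mul_zero _
        linarith
    have per_t : ∀ t ∈ Finset.range T,
        ∑' z, a t z ≤ (2 * l)⁻¹ * ∑' z, u t z + (l / 2) * ∑' z, v t z := by
      intro t ht'
      have ht := Finset.mem_range.mp ht'
      have hsum1 : Summable (fun z => (2 * l)⁻¹ * u t z) := (hu_sum t ht).mul_left _
      have hsum2 : Summable (fun z => (l / 2) * v t z) := (hv_sum t ht).mul_left _
      calc ∑' z, a t z ≤ ∑' z, ((2 * l)⁻¹ * u t z + (l / 2) * v t z) :=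
            Summable.tsum_le_tsum (point t ht) (ha_sum t ht) (hsum1.add hsum2)
        _ = (2 * l)⁻¹ * ∑' z, u t z + (l / 2) * ∑' z, v t z := by
            rw [Summable.tsum_add hsum1 hsum2, tsum_mul_left, tsum_mul_left]
    calc ∑ t ∈ Finset.range T, ∑' z, a t z
        ≤ ∑ t ∈ Finset.range T, ((2 * l)⁻¹ * ∑' z, u t z + (l / 2) * ∑' z, v t z) :=
          Finset.sum_le_sum per_t
      _ = (2 * l)⁻¹ * U + (l / 2) * ∑ t ∈ Finset.range T, ∑' z, v t z := by
          rw [Finset.sum_add_distrib, ← Finset.mul_sum, ← Finset.mul_sum, hUdef]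
      _ = U / (2 * l) + l * V / 2 := by
          rw [hVv]; ring
  -- Step D : U bound
  have hUbound : U ≤ 2 * C * Real.log (2 * T) := by
    have hswap : U = ∑' z, ∑ t ∈ Finset.range T, u t z := by
      rw [hUdef]
      exact (Summable.tsum_finsetSum fun t ht => hu_sum t (Finset.mem_range.mp ht)).symm
    rw [hswap]
    have hsum1 : Summable (fun z => ∑ t ∈ Finset.range T, u t z) :=
      summable_sum fun t ht => hu_sum t (Finset.mem_range.mp ht)
    have hsum2 : Summable (fun z => 2 * (C * μ z) * Real.log (2 * T)) := by
      apply Summable.congr (hμsum.summable.mul_left (2 * C * Real.log (2 * T)))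
      intro z; ring
    calc ∑' z, ∑ t ∈ Finset.range T, u t z
        ≤ ∑' z, 2 * (C * μ z) * Real.log (2 * T) := by
          apply Summable.tsum_le_tsum _ hsum1 hsum2
          intro z
          have hpa := potential_aux T hT (fun i => d i z) (C * μ z) (mul_nonneg hC (hμ0 z))
            (fun t ht => hd0 t z) (fun t ht => hcov t ht z)
          simpa only [hudef, hMdef] using hpa
      _ = 2 * C * Real.log (2 * T) := by
          have : (fun z => 2 * (C * μ z) * Real.log (2 * T))
              = fun z => 2 * C * Real.log (2 * T) * μ z := by
            funext z; ring
          rw [this, tsum_mul_left, hμsum.tsum_eq, mul_one]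
  -- Step F : combine
  have hA : (∑ t ∈ Finset.range T, ∑' z, a t z)
      ≤ Real.sqrt (2 * C * Real.log (2 * T) * V) := by
    apply lambda_trick _ _ _ (by positivity) hVnonneg
    intro l hl
    refine (hstepC l hl).trans ?_
    have hdiv : U / (2 * l) ≤ 2 * C * Real.log (2 * T) / (2 * l) := by
      gcongr
    linarith
  calc ∑ t ∈ Finset.range T, ∑' z, d t z * g t z
      ≤ (∑ t ∈ Finset.range T, ∑' z, a t z) + ∑ t ∈ Finset.range T, ∑' z, b t z := hLHS
    _ ≤ Real.sqrt (2 * C * Real.log (2 * T) * V) + 2 * C * B := add_le_add hA hburn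
end

section
/- For any nonnegative functions d_π, d_p, μ on a countable set S with Σ d_π = 1, and any ε, δ > 0: Σ_s d_π(s)·[d_π(s)/(d_p(s) + ε·d_π(s))] ≤ Σ_s d_π(s)·[d_π(s)/(d_p(s) + δ·μ(s))] + (δ/ε)·Σ_s d_π(s)·[μ(s)/(d_p(s) + δ·μ(s))]. -/
/-- Lemma pi_to_mu: changing the regularizer in the denominator of the L1-coverage
ratio from ε·d_π to δ·μ incurs a controlled additive error. -/
theorem pi_to_mu {S : Type*} [Countable S] (dπ dp μ : S → ℝ) (ε δ : ℝ)
    (hπ0 : ∀ s, 0 ≤ dπ s) (hp0 : ∀ s, 0 ≤ dp s) (hμ0 : ∀ s, 0 ≤ μ s)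
    (hπsum : HasSum dπ 1) (hε : 0 < ε) (hδ : 0 < δ)
    (hsupp : ∀ s, 0 < dπ s → 0 < dp s + δ * μ s)
    (hsumm : Summable fun s => dπ s * (dπ s / (dp s + δ * μ s))) :
    ∑' s, dπ s * (dπ s / (dp s + ε * dπ s)) ≤
      (∑' s, dπ s * (dπ s / (dp s + δ * μ s))) +
        (δ / ε) * ∑' s, dπ s * (μ s / (dp s + δ * μ s)) := by
  have hh : Summable (fun s => dπ s * (μ s / (dp s + δ * μ s))) := by
    apply Summable.of_nonneg_of_le
      (fun s => mul_nonneg (hπ0 s) (div_nonneg (hμ0 s)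
        (add_nonneg (hp0 s) (mul_nonneg hδ.le (hμ0 s)))))
      (fun s => ?_) (hπsum.summable.mul_right (1/δ))
    rcases eq_or_lt_of_le (add_nonneg (hp0 s) (mul_nonneg hδ.le (hμ0 s))) with h | h
    · rw [← h, div_zero, mul_zero]
      exact mul_nonneg (hπ0 s) (by positivity)
    · apply mul_le_mul_of_nonneg_left _ (hπ0 s)
      rw [div_le_div_iff₀ h (by positivity)]
      nlinarith [hp0 s, hμ0 s]
  have hL : Summable (fun s => dπ s * (dπ s / (dp s + ε * dπ s))) := by
    apply Summable.of_nonneg_of_le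
      (fun s => mul_nonneg (hπ0 s) (div_nonneg (hπ0 s)
        (add_nonneg (hp0 s) (mul_nonneg hε.le (hπ0 s)))))
      (fun s => ?_) (hπsum.summable.mul_right (1/ε))
    rcases eq_or_lt_of_le (add_nonneg (hp0 s) (mul_nonneg hε.le (hπ0 s))) with h | h
    · rw [← h, div_zero, mul_zero]
      exact mul_nonneg (hπ0 s) (by positivity)
    · apply mul_le_mul_of_nonneg_left _ (hπ0 s)
      rw [div_le_div_iff₀ h (by positivity)]
      nlinarith [hp0 s, hπ0 s]
  have key : ∀ s, dπ s * (dπ s / (dp s + ε * dπ s)) ≤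
      dπ s * (dπ s / (dp s + δ * μ s)) + (δ / ε) * (dπ s * (μ s / (dp s + δ * μ s))) := by
    intro s
    rcases eq_or_lt_of_le (hπ0 s) with h | h
    · rw [← h]; simp
    · have hd2 : 0 < dp s + δ * μ s := hsupp s h
      have hd1 : 0 < dp s + ε * dπ s := by nlinarith [hp0 s]
      have hrhs : dπ s * (dπ s / (dp s + δ * μ s)) + (δ / ε) * (dπ s * (μ s / (dp s + δ * μ s)))
          = dπ s * ((dπ s + (δ/ε) * μ s) / (dp s + δ * μ s)) := by
        field_simp
      rw [hrhs]
      apply mul_le_mul_of_nonneg_left _ (hπ0 s)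
      rw [div_le_div_iff₀ hd1 hd2]
      have h1 : 0 ≤ δ/ε * (μ s * dp s) :=
        mul_nonneg (by positivity) (mul_nonneg (hμ0 s) (hp0 s))
      nlinarith [mul_pos hε (mul_pos h h), div_mul_cancel₀ δ hε.ne', mul_nonneg (hμ0 s) h.le, hp0 s, hμ0 s]
  calc ∑' s, dπ s * (dπ s / (dp s + ε * dπ s))
      ≤ ∑' s, (dπ s * (dπ s / (dp s + δ * μ s)) + (δ / ε) * (dπ s * (μ s / (dp s + δ * μ s)))) :=
        Summable.tsum_le_tsum key hL (hsumm.add (hh.mul_left (δ/ε)))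
    _ = (∑' s, dπ s * (dπ s / (dp s + δ * μ s))) +
        (δ / ε) * ∑' s, dπ s * (μ s / (dp s + δ * μ s)) := by
        rw [Summable.tsum_add hsumm (hh.mul_left (δ/ε)), tsum_mul_left]
end

section
/- Let μ be a distribution on a countable set S of state-action pairs such that d_π(s) ≤ C·μ(s) for all s ∈ S and all π in a policy class Π (where d_π is the occupancy of π). Then for any distribution p and any π ∈ Π, Σ_s d_π(s)·[d_π(s)/(d_p(s) + ε·d_π(s))] ≤ 2C · Σ_s d_π(s)·[μ(s)/(d_p(s) + ε·C·μ(s))]. -/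
/-- Proposition linf_relaxation: the L1-coverage objective is upper bounded by 2C
times the L∞-coverability relaxation. -/
theorem linf_relaxation {S : Type*} [Countable S] (dπ dp μ : S → ℝ) (C ε : ℝ)
    (hπ0 : ∀ s, 0 ≤ dπ s) (hp0 : ∀ s, 0 ≤ dp s) (hμ0 : ∀ s, 0 ≤ μ s)
    (hπsum : HasSum dπ 1) (hC : 0 < C) (hε : 0 < ε)
    (hcov : ∀ s, dπ s ≤ C * μ s) :
    ∑' s, dπ s * (dπ s / (dp s + ε * dπ s)) ≤
      2 * C * ∑' s, dπ s * (μ s / (dp s + ε * C * μ s)) := by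
  set f : S → ℝ := fun s => dπ s * (dπ s / (dp s + ε * dπ s)) with hf
  set g : S → ℝ := fun s => dπ s * (μ s / (dp s + ε * C * μ s)) with hg
  have hfle : ∀ s, f s ≤ (1/ε) * dπ s := by
    intro s
    simp only [hf]
    rcases eq_or_lt_of_le (hπ0 s) with h | h
    · simp [← h]
    · have hden : 0 < dp s + ε * dπ s := by
        have : 0 < ε * dπ s := by positivity
        linarith [hp0 s]
      have : dπ s / (dp s + ε * dπ s) ≤ 1/ε := by
        rw [div_le_div_iff₀ hden hε]
        nlinarith [hp0 s]
      nlinarith [hπ0 s]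
  have hgle : ∀ s, 2 * C * g s ≤ (2/ε) * dπ s := by
    intro s
    simp only [hg]
    rcases eq_or_lt_of_le (hμ0 s) with h | h
    · simp [← h]
      have := hπ0 s; positivity
    · have hden : 0 < dp s + ε * C * μ s := by
        have : 0 < ε * C * μ s := by positivity
        linarith [hp0 s]
      have : μ s / (dp s + ε * C * μ s) ≤ 1/(ε*C) := by
        rw [div_le_div_iff₀ hden (by positivity)]
        nlinarith [hp0 s]
      have h2 : 0 < ε * C := by positivity
      have := mul_le_mul_of_nonneg_left this (hπ0 s)
      calc 2 * C * (dπ s * (μ s / (dp s + ε * C * μ s)))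
          ≤ 2 * C * (dπ s * (1/(ε*C))) := by nlinarith
        _ = (2/ε) * dπ s := by field_simp
  have hf0 : ∀ s, 0 ≤ f s := fun s => by
    have := hp0 s; have := hπ0 s; positivity
  have hg0 : ∀ s, 0 ≤ 2 * C * g s := fun s => by
    have := hp0 s; have := hπ0 s; have := hμ0 s; positivity
  have hsumf : Summable f :=
    Summable.of_nonneg_of_le hf0 hfle (hπsum.summable.mul_left _)
  have hsumg : Summable (fun s => 2 * C * g s) :=
    Summable.of_nonneg_of_le hg0 hgle (hπsum.summable.mul_left _)
  have hpt : ∀ s, f s ≤ 2 * C * g s := by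
    intro s
    simp only [hf, hg]
    rcases eq_or_lt_of_le (hπ0 s) with h | h
    · simp [← h]
    · have hμpos : 0 < μ s := by nlinarith [hcov s]
      have hd1 : 0 < dp s + ε * dπ s := by
        have : 0 < ε * dπ s := by positivity
        linarith [hp0 s]
      have hd2 : 0 < dp s + ε * C * μ s := by
        have : 0 < ε * C * μ s := by positivity
        linarith [hp0 s]
      have key : dπ s * dπ s * (dp s + ε * C * μ s) ≤
          2 * C * (dπ s * μ s) * (dp s + ε * dπ s) := by
        nlinarith [hcov s, hp0 s, mul_le_mul_of_nonneg_left (hcov s) (hp0 s)]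
      rw [mul_div_assoc', mul_div_assoc', mul_div_assoc', div_le_div_iff₀ hd1 hd2]
      nlinarith [key]
  calc ∑' s, f s ≤ ∑' s, 2 * C * g s := Summable.tsum_le_tsum hpt hsumf hsumg
    _ = 2 * C * ∑' s, g s := tsum_mul_left
end

section
/- Let occupancies d^{π¹}, ..., d^{π^T} and a distribution μ over a countable set S satisfy d^{πᵗ}(s) ≤ C·μ(s) for all s, t. Suppose at each step t the policy πᵗ satisfies E_{s∼d^{πᵗ}}[μ(s)/(Σ_{i<t} d^{πⁱ}(s) + C·μ(s))] ≥ sup_{π∈Π} E_{s∼d^π}[μ(s)/(Σ_{i<t} d^{πⁱ}(s) + C·μ(s))] − ε_opt, with this sup-property also holding for the final mixture and ε_opt ≤ ε·log(2/ε). Then for T = 1/ε, the uniform mixture p = Unif(π¹,...,π^T) satisfies sup_{π∈Π} E_{s∼d^π}[μ(s)/(d_p(s) + ε·C·μ(s))] ≤ 3·log(2/ε). -/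
private lemma le_two_log_one_add {x : ℝ} (hx0 : 0 ≤ x) (hx1 : x ≤ 1) :
    x ≤ 2 * Real.log (1 + x) := by
  have h1 : (0:ℝ) < 1 + x := by linarith
  have hgoal : x / 2 ≤ Real.log (1 + x) → x ≤ 2 * Real.log (1 + x) := by
    intro h; linarith
  apply hgoal
  rw [Real.le_log_iff_exp_le h1]
  have h2 : 1 - x/2 ≤ Real.exp (-(x/2)) := by
    have := Real.add_one_le_exp (-(x/2)); linarith
  have h3 : Real.exp (x/2) * Real.exp (-(x/2)) = 1 := by
    rw [← Real.exp_add]; simp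
  have h4 : 0 < Real.exp (x/2) := Real.exp_pos _
  nlinarith [h4, h2, h3]

/-- Theorem linf_optimization: the uniform mixture of iteratively computed
near-optimal policies optimizes the L∞-coverability relaxation up to a log factor. -/
theorem linf_optimization {S ι : Type*} [Countable S]
    (d : ι → S → ℝ) (μ : S → ℝ) (C εopt : ℝ) (T : ℕ) (π : ℕ → ι)
    (hd0 : ∀ i s, 0 ≤ d i s) (hdsum : ∀ i, HasSum (d i) 1)
    (hμ0 : ∀ s, 0 ≤ μ s) (hμsum : HasSum μ 1)
    (hC : 0 < C) (hcov : ∀ i s, d i s ≤ C * μ s)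
    (hT : 1 ≤ T)
    (hεopt : εopt ≤ (1 / T) * Real.log (2 * T))
    (hopt : ∀ t < T, ∀ i : ι,
      ∑' s, d i s * (μ s / (∑ j ∈ Finset.range t, d (π j) s + C * μ s)) ≤
        (∑' s, d (π t) s * (μ s / (∑ j ∈ Finset.range t, d (π j) s + C * μ s))) + εopt) :
    ∀ i : ι,
      ∑' s, d i s *
          (μ s / ((∑ j ∈ Finset.range T, d (π j) s) / T + (1 / T) * C * μ s)) ≤
        3 * Real.log (2 * T) := by
  intro i
  set A : ℕ → S → ℝ := fun t s => ∑ j ∈ Finset.range t, d (π j) s + C * μ s with hA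
  have hX0 : ∀ t s, 0 ≤ ∑ j ∈ Finset.range t, d (π j) s := fun t s =>
    Finset.sum_nonneg fun j _ => hd0 _ _
  have hApos : ∀ t s, 0 < μ s → 0 < A t s := fun t s hμ => by
    have := hX0 t s; have : 0 < C * μ s := mul_pos hC hμ; simp only [hA]
    have := hX0 t s; linarith
  have hAnn : ∀ t s, 0 ≤ A t s := fun t s => by
    have h1 := hX0 t s; have h2 : 0 ≤ C * μ s := mul_nonneg hC.le (hμ0 s)
    simp only [hA]; linarith
  have hfrac_nn : ∀ t s, 0 ≤ μ s / A t s := fun t s => div_nonneg (hμ0 s) (hAnn t s)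
  have hfrac_le : ∀ t s, μ s / A t s ≤ 1 / C := by
    intro t s
    rcases eq_or_lt_of_le (hμ0 s) with h | h
    · rw [← h, zero_div]; positivity
    · rw [div_le_div_iff₀ (hApos t s h) hC]
      have := hX0 t s; simp only [hA]; nlinarith
  -- summability of the basic terms
  have hsummG : ∀ (k : ι) (t : ℕ), Summable (fun s => d k s * (μ s / A t s)) := by
    intro k t
    apply Summable.of_nonneg_of_le
      (fun s => mul_nonneg (hd0 k s) (hfrac_nn t s))
      (fun s => mul_le_mul_of_nonneg_left (hfrac_le t s) (hd0 k s))
    exact (hdsum k).summable.mul_right _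
  -- Step 1: rewrite the goal sum as T * ∑' s, d i s * (μ s / A T s)
  have h1 : ∑' s, d i s *
      (μ s / ((∑ j ∈ Finset.range T, d (π j) s) / T + (1 / T) * C * μ s)) =
      (T : ℝ) * ∑' s, d i s * (μ s / A T s) := by
    rw [← tsum_mul_left]
    apply tsum_congr
    intro s
    have hden : (∑ j ∈ Finset.range T, d (π j) s) / T + (1 / T) * C * μ s
        = A T s / T := by simp only [hA]; ring
    rw [hden, div_div_eq_mul_div]
    ring
  rw [h1]
  -- Step 2: monotonicity + near-optimality
  have h2 : ∀ t < T, ∑' s, d i s * (μ s / A T s) ≤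
      (∑' s, d (π t) s * (μ s / A t s)) + εopt := by
    intro t ht
    refine le_trans ?_ (hopt t ht i)
    apply Summable.tsum_le_tsum _ (hsummG i T) (hsummG i t)
    intro s
    rcases eq_or_lt_of_le (hμ0 s) with h | h
    · rw [← h]; simp
    · apply mul_le_mul_of_nonneg_left _ (hd0 i s)
      apply div_le_div_of_nonneg_left (hμ0 s) (hApos t s h)
      simp only [hA]
      have : ∑ j ∈ Finset.range t, d (π j) s ≤ ∑ j ∈ Finset.range T, d (π j) s :=
        Finset.sum_le_sum_of_subset_of_nonneg
          (Finset.range_subset_range.2 (le_of_lt ht)) (fun j _ _ => hd0 _ _)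
      linarith
  have hTpos : (0:ℝ) < T := by exact_mod_cast Nat.lt_of_lt_of_le Nat.zero_lt_one hT
  -- Step 3: elliptic potential bound
  have hT1 : (1:ℝ) ≤ T := by exact_mod_cast hT
  have hlog2T : (0:ℝ) ≤ Real.log (2 * T) := Real.log_nonneg (by linarith)
  have hpot : ∑ t ∈ Finset.range T, ∑' s, d (π t) s * (μ s / A t s) ≤
      2 * Real.log (2 * T) := by
    rw [← Summable.tsum_finsetSum (fun t _ => hsummG (π t) t)]
    have hbig : Summable (fun s => ∑ t ∈ Finset.range T, d (π t) s * (μ s / A t s)) :=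
      (hasSum_sum (fun t (_ : t ∈ Finset.range T) => (hsummG (π t) t).hasSum)).summable
    have hrhs : Summable (fun s => 2 * Real.log (2 * T) * μ s) :=
      hμsum.summable.mul_left _
    calc ∑' s, ∑ t ∈ Finset.range T, d (π t) s * (μ s / A t s)
        ≤ ∑' s, 2 * Real.log (2 * T) * μ s := by
          apply Summable.tsum_le_tsum _ hbig hrhs
          intro s
          rcases eq_or_lt_of_le (hμ0 s) with h | h
          · rw [← h]
            have : ∀ t ∈ Finset.range T, d (π t) s * ((0:ℝ) / A t s) = 0 := by
              intro t _; simp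
            rw [Finset.sum_congr rfl this]; simp
          · -- per-state elliptic potential
            set X : ℕ → ℝ := fun t => ∑ j ∈ Finset.range t, d (π j) s with hXdef
            have hm : 0 < C * μ s := mul_pos hC h
            have hterm : ∀ t ∈ Finset.range T, d (π t) s * (μ s / A t s) ≤
                2 * μ s * (Real.log (X (t+1) + C * μ s) - Real.log (X t + C * μ s)) := by
              intro t _
              have hAt : 0 < X t + C * μ s := by have := hX0 t s; simp only [hXdef]; linarith
              have hx : d (π t) s / (X t + C * μ s) ≤ 1 := by
                rw [div_le_one hAt]
                have := hcov (π t) s; have := hX0 t s; simp only [hXdef]; linarith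
              have hkey := le_two_log_one_add (div_nonneg (hd0 _ _) hAt.le) hx
              have h1r : 1 + d (π t) s / (X t + C * μ s) =
                  (X (t+1) + C * μ s) / (X t + C * μ s) := by
                field_simp
                simp only [hXdef, Finset.sum_range_succ]
                ring
              have hAt1 : 0 < X (t+1) + C * μ s := by
                have := hX0 (t+1) s; simp only [hXdef]; linarith
              rw [h1r, Real.log_div (ne_of_gt hAt1) (ne_of_gt hAt)] at hkey
              have : d (π t) s * (μ s / A t s) = μ s * (d (π t) s / (X t + C * μ s)) := by
                simp only [hA, hXdef]; ring
              rw [this]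
              calc μ s * (d (π t) s / (X t + C * μ s))
                  ≤ μ s * (2 * (Real.log (X (t+1) + C * μ s) - Real.log (X t + C * μ s))) :=
                    mul_le_mul_of_nonneg_left hkey (hμ0 s)
                _ = 2 * μ s * (Real.log (X (t+1) + C * μ s) - Real.log (X t + C * μ s)) := by
                    ring
            calc ∑ t ∈ Finset.range T, d (π t) s * (μ s / A t s)
                ≤ ∑ t ∈ Finset.range T,
                    2 * μ s * (Real.log (X (t+1) + C * μ s) - Real.log (X t + C * μ s)) :=
                  Finset.sum_le_sum hterm
              _ = 2 * μ s * (Real.log (X T + C * μ s) - Real.log (X 0 + C * μ s)) := by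
                  rw [← Finset.mul_sum,
                    Finset.sum_range_sub (fun t => Real.log (X t + C * μ s))]
              _ ≤ 2 * μ s * Real.log (2 * T) := by
                  apply mul_le_mul_of_nonneg_left _ (by linarith : (0:ℝ) ≤ 2 * μ s)
                  have hX0' : X 0 = 0 := by simp [hXdef]
                  rw [hX0', zero_add]
                  have hXT : X T ≤ T * (C * μ s) := by
                    simp only [hXdef]
                    calc ∑ j ∈ Finset.range T, d (π j) s
                        ≤ ∑ j ∈ Finset.range T, C * μ s :=
                          Finset.sum_le_sum (fun j _ => hcov (π j) s)
                      _ = T * (C * μ s) := by rw [Finset.sum_const, Finset.card_range]; ring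
                  have hlog1 : Real.log (X T + C * μ s) ≤ Real.log (2 * T * (C * μ s)) := by
                    apply Real.log_le_log (by have := hX0 T s; simp only [hXdef]; linarith)
                    nlinarith
                  rw [Real.log_mul (by positivity) (ne_of_gt hm)] at hlog1
                  linarith
              _ = 2 * Real.log (2 * T) * μ s := by ring
      _ = 2 * Real.log (2 * T) := by
          rw [tsum_mul_left, hμsum.tsum_eq, mul_one]
  -- Combine
  have hmain : (T : ℝ) * ∑' s, d i s * (μ s / A T s) ≤
      (∑ t ∈ Finset.range T, ∑' s, d (π t) s * (μ s / A t s)) + T * εopt := by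
    have : (T : ℝ) * ∑' s, d i s * (μ s / A T s) =
        ∑ t ∈ Finset.range T, ∑' s, d i s * (μ s / A T s) := by
      rw [Finset.sum_const, Finset.card_range, nsmul_eq_mul]
    rw [this]
    calc ∑ t ∈ Finset.range T, ∑' s, d i s * (μ s / A T s)
        ≤ ∑ t ∈ Finset.range T, ((∑' s, d (π t) s * (μ s / A t s)) + εopt) :=
          Finset.sum_le_sum (fun t ht => h2 t (Finset.mem_range.1 ht))
      _ = (∑ t ∈ Finset.range T, ∑' s, d (π t) s * (μ s / A t s)) + T * εopt := by
          rw [Finset.sum_add_distrib, Finset.sum_const, Finset.card_range, nsmul_eq_mul]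
  have hεT : (T : ℝ) * εopt ≤ Real.log (2 * T) := by
    calc (T : ℝ) * εopt ≤ (T : ℝ) * ((1 / T) * Real.log (2 * T)) :=
          mul_le_mul_of_nonneg_left hεopt hTpos.le
      _ = Real.log (2 * T) := by field_simp
  linarith
end

section
/- Let d̂, d* be sub-probability functions and d_p a nonnegative function on a countable set S, with ε > 0. Then Σ_s d̂(s)·[d̂(s)/(d_p^*(s) + ε·d̂(s))] ≤ 3·Σ_s d̂(s)·[d̂(s)/(d_p(s) + ε·d̂(s))] + (4/ε²)·H²(d_p, d_p^*), where d_p and d_p^* are two nonnegative mixture occupancies, the ratios are measured against d_p^* and d_p respectively, and H²(d_p, d_p^*) = Σ_s (√(d_p(s)) − √(d_p^*(s)))² is the squared Hellinger distance. -/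
/-- Lemma dp_com specialized to occupancy measures: change of measure between
two mixture occupancies via the squared Hellinger distance. -/
theorem dp_change_of_measure {S : Type*} [Countable S]
    (dhat dp dps : S → ℝ) (ε : ℝ)
    (hhat0 : ∀ s, 0 ≤ dhat s) (hp0 : ∀ s, 0 ≤ dp s) (hps0 : ∀ s, 0 ≤ dps s)
    (hhat : Summable dhat) (hhatsum : ∑' s, dhat s ≤ 1)
    (hp : Summable dp) (hpsum : ∑' s, dp s ≤ 1)
    (hps : Summable dps) (hpssum : ∑' s, dps s ≤ 1)
    (hε : 0 < ε) :
    ∑' s, dhat s * (dhat s / (dps s + ε * dhat s)) ≤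
      3 * ∑' s, dhat s * (dhat s / (dp s + ε * dhat s)) +
        (4 / ε ^ 2) * ∑' s, (Real.sqrt (dp s) - Real.sqrt (dps s)) ^ 2 := by
  set f1 : S → ℝ := fun s => dhat s * (dhat s / (dps s + ε * dhat s)) with hf1
  set f2 : S → ℝ := fun s => dhat s * (dhat s / (dp s + ε * dhat s)) with hf2
  set H : S → ℝ := fun s => (Real.sqrt (dp s) - Real.sqrt (dps s)) ^ 2 with hH
  have hf1nn : ∀ s, 0 ≤ f1 s := fun s =>
    mul_nonneg (hhat0 s) (div_nonneg (hhat0 s)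
      (add_nonneg (hps0 s) (mul_nonneg hε.le (hhat0 s))))
  have hf2nn : ∀ s, 0 ≤ f2 s := fun s =>
    mul_nonneg (hhat0 s) (div_nonneg (hhat0 s)
      (add_nonneg (hp0 s) (mul_nonneg hε.le (hhat0 s))))
  have hHnn : ∀ s, 0 ≤ H s := fun s => sq_nonneg _
  have hbound : ∀ (g : S → ℝ), (∀ s, 0 ≤ g s) →
      Summable (fun s => dhat s * (dhat s / (g s + ε * dhat s))) := by
    intro g hg
    refine Summable.of_nonneg_of_le
      (fun s => mul_nonneg (hhat0 s) (div_nonneg (hhat0 s)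
        (add_nonneg (hg s) (mul_nonneg hε.le (hhat0 s)))))
      (f := fun s => dhat s / ε) ?_ (hhat.div_const ε)
    intro s
    rcases eq_or_lt_of_le (hhat0 s) with h | h
    · rw [← h]
      simp
    · have hden : 0 < g s + ε * dhat s := by
        have := hg s; positivity
      have hratio : dhat s / (g s + ε * dhat s) ≤ 1 / ε := by
        rw [div_le_div_iff₀ hden hε]
        have := hg s
        nlinarith
      calc dhat s * (dhat s / (g s + ε * dhat s)) ≤ dhat s * (1 / ε) :=
            mul_le_mul_of_nonneg_left hratio (hhat0 s)
        _ = dhat s / ε := by ring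
  have hs1 : Summable f1 := hbound dps hps0
  have hs2 : Summable f2 := hbound dp hp0
  have hsH : Summable H := by
    refine Summable.of_nonneg_of_le hHnn (f := fun s => dp s + dps s) ?_ (hp.add hps)
    intro s
    have h1 := Real.sq_sqrt (hp0 s)
    have h2 := Real.sq_sqrt (hps0 s)
    simp only [hH]
    nlinarith [mul_nonneg (Real.sqrt_nonneg (dp s)) (Real.sqrt_nonneg (dps s))]
  have key : ∀ s, f1 s ≤ 2 * f2 s + (2 / ε ^ 2) * H s := by
    intro s
    rcases eq_or_lt_of_le (hhat0 s) with h | h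
    · have h0 : f1 s = 0 := by simp [hf1, ← h]
      rw [h0]
      have := hf2nn s
      have := hHnn s
      positivity
    · have hA0 : 0 < dps s + ε * dhat s := by have := hps0 s; positivity
      have hB0 : 0 < dp s + ε * dhat s := by have := hp0 s; positivity
      have hεd : ε * dhat s ≤ dps s + ε * dhat s := by have := hps0 s; linarith
      have hεd' : ε * dhat s ≤ dp s + ε * dhat s := by have := hp0 s; linarith
      have hsq : dp s + ε * dhat s ≤ 2 * (dps s + ε * dhat s) + 2 * H s := by
        have h1 := Real.sq_sqrt (hp0 s)
        have h2 := Real.sq_sqrt (hps0 s)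
        have h3 := Real.sqrt_nonneg (dp s)
        have h4 := Real.sqrt_nonneg (dps s)
        simp only [hH]
        nlinarith [sq_nonneg (Real.sqrt (dp s) - 2 * Real.sqrt (dps s)),
          mul_nonneg hε.le (hhat0 s)]
      set k := dhat s ^ 2 / ((dps s + ε * dhat s) * (dp s + ε * dhat s)) with hk
      have hk0 : 0 ≤ k := by positivity
      have hkle : k ≤ 1 / ε ^ 2 := by
        rw [hk, div_le_div_iff₀ (by positivity) (by positivity)]
        nlinarith [mul_le_mul hεd hεd' (by positivity : (0:ℝ) ≤ ε * dhat s) hA0.le]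
      have e1 : f1 s = (dp s + ε * dhat s) * k := by
        simp only [hf1, hk]
        simp only [mul_div_assoc']
        rw [div_eq_div_iff hA0.ne' (mul_ne_zero hA0.ne' hB0.ne')]
        ring
      have e2 : (dps s + ε * dhat s) * k = f2 s := by
        simp only [hf2, hk]
        field_simp
      calc f1 s = (dp s + ε * dhat s) * k := e1
        _ ≤ (2 * (dps s + ε * dhat s) + 2 * H s) * k :=
            mul_le_mul_of_nonneg_right hsq hk0
        _ = 2 * ((dps s + ε * dhat s) * k) + 2 * (H s * k) := by ring
        _ ≤ 2 * f2 s + (2 / ε ^ 2) * H s := by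
            rw [e2]
            have hh : H s * k ≤ H s * (1 / ε ^ 2) :=
              mul_le_mul_of_nonneg_left hkle (hHnn s)
            have hε2 : (0:ℝ) < ε ^ 2 := by positivity
            have : (2 / ε ^ 2) * H s = 2 * (H s * (1 / ε ^ 2)) := by ring
            linarith
  have hsum : ∑' s, f1 s ≤ ∑' s, (2 * f2 s + (2 / ε ^ 2) * H s) := by
    apply Summable.tsum_le_tsum key hs1
    exact ((hs2.mul_left 2).add (hsH.mul_left (2 / ε ^ 2)))
  have heq : ∑' s, (2 * f2 s + (2 / ε ^ 2) * H s)
      = 2 * ∑' s, f2 s + (2 / ε ^ 2) * ∑' s, H s := by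
    rw [Summable.tsum_add (hs2.mul_left 2) (hsH.mul_left (2 / ε ^ 2)),
      tsum_mul_left, tsum_mul_left]
  have hS2 : 0 ≤ ∑' s, f2 s := tsum_nonneg hf2nn
  have hSH : 0 ≤ ∑' s, H s := tsum_nonneg hHnn
  have hε2 : (0:ℝ) < ε ^ 2 := by positivity
  have h24 : (2:ℝ) / ε ^ 2 ≤ 4 / ε ^ 2 := by gcongr <;> norm_num
  have hco : (2 / ε ^ 2) * ∑' s, H s ≤ (4 / ε ^ 2) * ∑' s, H s :=
    mul_le_mul_of_nonneg_right h24 hSH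
  calc ∑' s, f1 s ≤ 2 * ∑' s, f2 s + (2 / ε ^ 2) * ∑' s, H s := heq ▸ hsum
    _ ≤ 3 * ∑' s, f2 s + (4 / ε ^ 2) * ∑' s, H s := by linarith
end

section
/- Let P and Q be probability measures on a measurable space and h a measurable function with 0 ≤ h ≤ B almost surely under both P and Q. Then E_P[h] ≤ 3·E_Q[h] + 4·B·H²(P, Q), where H²(P,Q) = ∫(√(dP/dω) − √(dQ/dω))² dω is the squared Hellinger distance (for any common dominating measure ω). -/
open MeasureTheory

/-- Lemma mp_min: multiplicative change-of-measure inequality via Hellinger distance. -/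
theorem mp_min {Ω : Type*} [MeasurableSpace Ω] (ω P Q : Measure Ω)
    [SigmaFinite ω] [IsProbabilityMeasure P] [IsProbabilityMeasure Q]
    (hP : P ≪ ω) (hQ : Q ≪ ω) (h : Ω → ℝ) (hmeas : Measurable h) (B : ℝ)
    (hPbd : ∀ᵐ z ∂P, h z ∈ Set.Icc (0 : ℝ) B)
    (hQbd : ∀ᵐ z ∂Q, h z ∈ Set.Icc (0 : ℝ) B) :
    ∫ z, h z ∂P ≤ 3 * ∫ z, h z ∂Q +
      4 * B * ∫ z, (Real.sqrt ((P.rnDeriv ω z).toReal) -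
        Real.sqrt ((Q.rnDeriv ω z).toReal)) ^ 2 ∂ω := by
  set p : Ω → ℝ := fun z => (P.rnDeriv ω z).toReal with hp
  set q : Ω → ℝ := fun z => (Q.rnDeriv ω z).toReal with hq
  set g : Ω → ℝ := fun z => (Real.sqrt (p z) - Real.sqrt (q z)) ^ 2 with hg
  -- B ≥ 0
  obtain ⟨z₀, hz₀⟩ := hPbd.exists
  have hB : 0 ≤ B := le_trans hz₀.1 hz₀.2
  -- ae transfer
  have haeP : ∀ᵐ z ∂ω, P.rnDeriv ω z ≠ 0 → h z ∈ Set.Icc (0 : ℝ) B := by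
    have := hPbd
    rw [← Measure.withDensity_rnDeriv_eq P ω hP,
      ae_withDensity_iff (Measure.measurable_rnDeriv P ω)] at this
    exact this
  have haeQ : ∀ᵐ z ∂ω, Q.rnDeriv ω z ≠ 0 → h z ∈ Set.Icc (0 : ℝ) B := by
    have := hQbd
    rw [← Measure.withDensity_rnDeriv_eq Q ω hQ,
      ae_withDensity_iff (Measure.measurable_rnDeriv Q ω)] at this
    exact this
  -- integrability
  have hintp : Integrable p ω := Measure.integrable_toReal_rnDeriv
  have hintq : Integrable q ω := Measure.integrable_toReal_rnDeriv
  have hhP : Integrable h P := by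
    refine (integrable_const B).mono' hmeas.aestronglyMeasurable ?_
    filter_upwards [hPbd] with z hz
    rw [Real.norm_eq_abs, abs_of_nonneg hz.1]; exact hz.2
  have hhQ : Integrable h Q := by
    refine (integrable_const B).mono' hmeas.aestronglyMeasurable ?_
    filter_upwards [hQbd] with z hz
    rw [Real.norm_eq_abs, abs_of_nonneg hz.1]; exact hz.2
  have hintph : Integrable (fun z => p z * h z) ω := by
    simpa [smul_eq_mul] using (integrable_rnDeriv_smul_iff hP (f := h)).mpr hhP
  have hintqh : Integrable (fun z => q z * h z) ω := by
    simpa [smul_eq_mul] using (integrable_rnDeriv_smul_iff hQ (f := h)).mpr hhQ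
  have hgmeas : Measurable g := by
    exact ((Measurable.sub ((Measure.measurable_rnDeriv P ω).ennreal_toReal.sqrt)
      ((Measure.measurable_rnDeriv Q ω).ennreal_toReal.sqrt)).pow_const 2)
  have hpnn : ∀ z, 0 ≤ p z := fun z => ENNReal.toReal_nonneg
  have hqnn : ∀ z, 0 ≤ q z := fun z => ENNReal.toReal_nonneg
  have hintg : Integrable g ω := by
    refine (hintp.add hintq).mono' hgmeas.aestronglyMeasurable ?_
    filter_upwards with z
    have h1 := Real.sq_sqrt (hpnn z)
    have h2 := Real.sq_sqrt (hqnn z)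
    have h3 := Real.sqrt_nonneg (p z)
    have h4 := Real.sqrt_nonneg (q z)
    rw [Real.norm_eq_abs, abs_of_nonneg (sq_nonneg _)]
    simp only [hg, Pi.add_apply]
    nlinarith [mul_nonneg h3 h4]
  have hgnn : 0 ≤ ∫ z, g z ∂ω := integral_nonneg fun z => sq_nonneg _
  have hQnn : 0 ≤ ∫ z, h z ∂Q := by
    refine integral_nonneg_of_ae ?_
    filter_upwards [hQbd] with z hz using hz.1
  -- rewrite integrals over P and Q
  have hPint : ∫ z, h z ∂P = ∫ z, p z * h z ∂ω := by
    rw [← integral_rnDeriv_smul hP (f := h)]; rfl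
  have hQint : ∫ z, h z ∂Q = ∫ z, q z * h z ∂ω := by
    rw [← integral_rnDeriv_smul hQ (f := h)]; rfl
  -- pointwise inequality
  have key : ∫ z, p z * h z ∂ω ≤ ∫ z, (2 * (q z * h z) + 2 * B * g z) ∂ω := by
    refine integral_mono_ae hintph ((hintqh.const_mul 2).add (hintg.const_mul (2 * B))) ?_
    filter_upwards [haeP, haeQ] with z hzP hzQ
    have h1 := Real.sq_sqrt (hpnn z)
    have h2 := Real.sq_sqrt (hqnn z)
    have h3 := Real.sqrt_nonneg (p z)
    have h4 := Real.sqrt_nonneg (q z)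
    by_cases hpz : P.rnDeriv ω z = 0
    · have hpz' : p z = 0 := by simp [hp, hpz]
      have hqh : 0 ≤ q z * h z := by
        by_cases hqz : Q.rnDeriv ω z = 0
        · simp [hq, hqz]
        · exact mul_nonneg (hqnn z) (hzQ hqz).1
      have hph : p z * h z = 0 := by rw [hpz']; ring
      have : 0 ≤ 2 * B * g z := by positivity
      linarith
    · obtain ⟨hh0, hhB⟩ := hzP hpz
      have hqh : 0 ≤ q z * h z := mul_nonneg (hqnn z) hh0
      simp only [hg]
      nlinarith [mul_nonneg (sub_nonneg.mpr hhB) (sq_nonneg (Real.sqrt (p z) - Real.sqrt (q z))),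
        mul_nonneg hh0 (sq_nonneg (Real.sqrt (p z) - 2 * Real.sqrt (q z)))]
  rw [hPint, hQint]
  rw [integral_add (hintqh.const_mul 2) (hintg.const_mul (2 * B)),
    integral_const_mul, integral_const_mul] at key
  nlinarith [mul_nonneg hB hgnn]
end

section
/- Suppose w* = μ/ν pointwise for probability distributions μ, ν on a countable set Z with ν(z) > 0 wherever μ(z) > 0, define the Hellinger-type divergence D(w, w*) = Σ_z ν(z)·(√(w(z)) − √(w*(z)))², and let V(w) = Σ_z μ(z)·log(w(z)) − Σ_z ν(z)·w(z). Then for any w: Z → ℝ≥0, V(w*) − V(w) ≥ (1/2)·D(w, w*) + (1/2)·(1 − Σ_z ν(z)·w(z)) − (1/2)·(Σ_z ν(z)·w*(z) − Σ_z ν(z)·w(z)), and in particular V(w*) ≥ V(w) for all w, i.e. w* maximizes the population objective V. -/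
/-- The density ratio w* = μ/ν maximizes the population objective
V(w) = E_μ[log w] − E_ν[w], with a quantitative Hellinger-type gap. -/
theorem density_ratio_population_identity {Z : Type*} [Countable Z]
    (μ ν w : Z → ℝ)
    (hμ0 : ∀ z, 0 ≤ μ z) (hν0 : ∀ z, 0 ≤ ν z)
    (hμ : HasSum μ 1) (hν : HasSum ν 1)
    (hsupp : ∀ z, 0 < μ z → 0 < ν z)
    (hw0 : ∀ z, 0 ≤ w z) (hwpos : ∀ z, 0 < μ z → 0 < w z)
    (h₁ : Summable fun z => μ z * Real.log (w z))
    (h₂ : Summable fun z => ν z * w z)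
    (h₃ : Summable fun z => μ z * Real.log (μ z / ν z)) :
    ((∑' z, μ z * Real.log (μ z / ν z)) - ∑' z, ν z * (μ z / ν z)) -
        ((∑' z, μ z * Real.log (w z)) - ∑' z, ν z * w z) ≥
      (1 / 2) * (∑' z, ν z * (Real.sqrt (w z) - Real.sqrt (μ z / ν z)) ^ 2) +
        (1 / 2) * (1 - ∑' z, ν z * w z) -
        (1 / 2) * ((∑' z, ν z * (μ z / ν z)) - ∑' z, ν z * w z) ∧
    ((∑' z, μ z * Real.log (w z)) - ∑' z, ν z * w z) ≤
      (∑' z, μ z * Real.log (μ z / ν z)) - ∑' z, ν z * (μ z / ν z) := by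
  -- ν z * (μ z / ν z) = μ z pointwise
  have key1 : ∀ z, ν z * (μ z / ν z) = μ z := by
    intro z
    rcases eq_or_lt_of_le (hν0 z) with h | h
    · have hμz : μ z = 0 := by
        by_contra hne
        exact absurd (hsupp z (lt_of_le_of_ne (hμ0 z) (Ne.symm hne))) (by rw [← h]; exact lt_irrefl 0)
      simp [← h, hμz]
    · field_simp
  have hq0 : ∀ z, 0 ≤ μ z / ν z := fun z => div_nonneg (hμ0 z) (hν0 z)
  have hB : (∑' z, ν z * (μ z / ν z)) = 1 := by
    rw [tsum_congr key1, hμ.tsum_eq]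
  -- the cross term s z = ν z * (√(w z) * √(μ z / ν z))
  set s : Z → ℝ := fun z => ν z * (Real.sqrt (w z) * Real.sqrt (μ z / ν z)) with hs_def
  have hs_nonneg : ∀ z, 0 ≤ s z := fun z =>
    mul_nonneg (hν0 z) (mul_nonneg (Real.sqrt_nonneg _) (Real.sqrt_nonneg _))
  have hs_le : ∀ z, s z ≤ (ν z * w z + μ z) / 2 := by
    intro z
    have h1 : Real.sqrt (w z) ^ 2 = w z := Real.sq_sqrt (hw0 z)
    have h2 : Real.sqrt (μ z / ν z) ^ 2 = μ z / ν z := Real.sq_sqrt (hq0 z)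
    have h3 := key1 z
    have h4 : 0 ≤ (Real.sqrt (w z) - Real.sqrt (μ z / ν z)) ^ 2 := sq_nonneg _
    have h5 := hν0 z
    simp only [hs_def]
    nlinarith [mul_nonneg h5 h4]
  have hsum_aux : Summable (fun z => (ν z * w z + μ z) / 2) :=
    (h₂.add hμ.summable).div_const 2
  have hS : Summable s := Summable.of_nonneg_of_le hs_nonneg hs_le hsum_aux
  -- Hellinger expansion
  have hexp : ∀ z, ν z * (Real.sqrt (w z) - Real.sqrt (μ z / ν z)) ^ 2
      = ν z * w z + μ z - 2 * s z := by
    intro z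
    have h1 : Real.sqrt (w z) ^ 2 = w z := Real.sq_sqrt (hw0 z)
    have h2 : Real.sqrt (μ z / ν z) ^ 2 = μ z / ν z := Real.sq_sqrt (hq0 z)
    have h3 := key1 z
    simp only [hs_def]
    linear_combination ν z * h1 + ν z * h2 + h3
  have hHsum : Summable (fun z => ν z * w z + μ z - 2 * s z) :=
    (h₂.add hμ.summable).sub (hS.mul_left 2)
  have hHval : (∑' z, ν z * (Real.sqrt (w z) - Real.sqrt (μ z / ν z)) ^ 2)
      = (∑' z, ν z * w z) + 1 - 2 * ∑' z, s z := by
    rw [tsum_congr hexp, Summable.tsum_sub (h₂.add hμ.summable) (hS.mul_left 2),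
      Summable.tsum_add h₂ hμ.summable, hμ.tsum_eq, tsum_mul_left]
  -- key pointwise log inequality
  have key : ∀ z, 2 * μ z - 2 * s z ≤ μ z * Real.log (μ z / ν z) - μ z * Real.log (w z) := by
    intro z
    rcases eq_or_lt_of_le (hμ0 z) with h | h
    · simp only [← h]
      have := hs_nonneg z
      simp only [zero_mul, sub_zero, mul_zero, zero_sub]
      linarith
    · have hνz := hsupp z h
      have hwz := hwpos z h
      have hq : 0 < μ z / ν z := div_pos h hνz
      set q := μ z / ν z with hqdef
      have hr : 0 < w z / q := div_pos hwz hq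
      have hlog : Real.log (w z / q) ≤ w z / q - 1 := Real.log_le_sub_one_of_pos hr
      -- use on sqrt instead
      have hrs : 0 < Real.sqrt (w z / q) := Real.sqrt_pos.mpr hr
      have hlog2 : Real.log (Real.sqrt (w z / q)) ≤ Real.sqrt (w z / q) - 1 :=
        Real.log_le_sub_one_of_pos hrs
      rw [Real.log_sqrt (le_of_lt hr)] at hlog2
      have hlogdiv : Real.log (w z / q) = Real.log (w z) - Real.log q :=
        Real.log_div (ne_of_gt hwz) (ne_of_gt hq)
      have hsqdiv : Real.sqrt (w z / q) = Real.sqrt (w z) / Real.sqrt q :=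
        Real.sqrt_div (hw0 z) q
      -- μ z * √(w z)/√q = s z
      have hsq : Real.sqrt q ^ 2 = q := Real.sq_sqrt (le_of_lt hq)
      have hsqpos : 0 < Real.sqrt q := Real.sqrt_pos.mpr hq
      have hμq : μ z = ν z * q := (key1 z).symm
      have hms : μ z * (Real.sqrt (w z) / Real.sqrt q) = s z := by
        simp only [hs_def, ← hqdef]
        calc μ z * (Real.sqrt (w z) / Real.sqrt q)
            = ν z * (Real.sqrt (w z) * (q / Real.sqrt q)) := by rw [hμq]; ring
          _ = ν z * (Real.sqrt (w z) * Real.sqrt q) := by rw [Real.div_sqrt]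
      -- from hlog2: (log w - log q)/2 ≤ √(w/q) - 1
      rw [hlogdiv, hsqdiv] at hlog2
      have := mul_le_mul_of_nonneg_left hlog2 (le_of_lt h)
      have hexpand : μ z * (Real.sqrt (w z) / Real.sqrt q - 1)
          = s z - μ z := by rw [mul_sub, hms, mul_one]
      nlinarith [this]
  -- summability and tsum bounds
  have hA_C : 2 * 1 - 2 * (∑' z, s z)
      ≤ (∑' z, μ z * Real.log (μ z / ν z)) - ∑' z, μ z * Real.log (w z) := by
    have hL : Summable (fun z => 2 * μ z - 2 * s z) :=
      (hμ.summable.mul_left 2).sub (hS.mul_left 2)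
    have hR : Summable (fun z => μ z * Real.log (μ z / ν z) - μ z * Real.log (w z)) :=
      h₃.sub h₁
    have := Summable.tsum_le_tsum key hL hR
    rwa [Summable.tsum_sub (hμ.summable.mul_left 2) (hS.mul_left 2), tsum_mul_left, tsum_mul_left,
      hμ.tsum_eq, Summable.tsum_sub h₃ h₁] at this
  have hSle : (∑' z, s z) ≤ ((∑' z, ν z * w z) + 1) / 2 := by
    have := Summable.tsum_le_tsum hs_le hS hsum_aux
    calc (∑' z, s z) ≤ ∑' z, (ν z * w z + μ z) / 2 := this
      _ = ((∑' z, ν z * w z) + 1) / 2 := by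
        rw [tsum_div_const, Summable.tsum_add h₂ hμ.summable, hμ.tsum_eq]
  constructor
  · rw [hB, hHval]; linarith
  · rw [hB]; linarith
end

section
/- Let X be a real-valued random variable with |X| ≤ R almost surely and 0 ≤ X. Then for any sequence X_1,...,X_T of random variables in [0,R] adapted to a filtration, with probability at least 1 − δ: Σ_{t=1}^T E[X_t | F_{t−1}] ≤ 2·Σ_{t=1}^T X_t + 8·R·log(2/δ). -/
open MeasureTheory

lemma mf_exp_neg_le {u : ℝ} (h0 : 0 ≤ u) (h1 : u ≤ 1) : Real.exp (-u) ≤ 1 - u / 2 := by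
  have hc := convexOn_exp.2 (Set.mem_univ (0:ℝ)) (Set.mem_univ (-1:ℝ))
    (by linarith : (0:ℝ) ≤ 1 - u) h0 (by ring)
  simp only [smul_eq_mul, mul_zero, mul_neg, mul_one, zero_add, Real.exp_zero] at hc
  have he : Real.exp (-1) ≤ 1/2 := by
    rw [Real.exp_neg]
    have h2 : (2:ℝ) ≤ Real.exp 1 := by have := Real.add_one_le_exp (1:ℝ); linarith
    rw [inv_le_comm₀ (Real.exp_pos 1) (by norm_num)]
    · linarith
  nlinarith [Real.exp_pos (-1)]

lemma mf_integrable_of_bound {Ω : Type*} {m0 : MeasurableSpace Ω} {μ : Measure Ω}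
    [IsFiniteMeasure μ] {f : Ω → ℝ} (hm : AEStronglyMeasurable f μ) (C : ℝ)
    (h : ∀ᵐ ω ∂μ, |f ω| ≤ C) : Integrable f μ :=
  ⟨hm, HasFiniteIntegral.of_bounded (by simpa [Real.norm_eq_abs] using h)⟩

lemma mf_exp_mul_one_sub_le (v : ℝ) : Real.exp v * (1 - v) ≤ 1 := by
  have h : 1 - v ≤ Real.exp (-v) := by have := Real.add_one_le_exp (-v); linarith
  calc Real.exp v * (1 - v) ≤ Real.exp v * Real.exp (-v) :=
        mul_le_mul_of_nonneg_left h (Real.exp_nonneg v)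
    _ = 1 := by rw [← Real.exp_add]; simp

/-- Multiplicative Freedman-type inequality (Lemma multiplicative_freedman). -/
theorem multiplicative_freedman {Ω : Type*} {m0 : MeasurableSpace Ω}
    (μ : Measure Ω) [IsProbabilityMeasure μ]
    (ℱ : Filtration ℕ m0) (X : ℕ → Ω → ℝ) (hadapted : StronglyAdapted ℱ X)
    (R δ : ℝ) (hR : 0 ≤ R) (hδ : 0 < δ)
    (hbdd : ∀ t ω', X t ω' ∈ Set.Icc (0 : ℝ) R) (T : ℕ) :
    ENNReal.ofReal (1 - δ) ≤
      μ {ω' | ∑ t ∈ Finset.range T, (μ[X (t + 1) | ℱ t]) ω' ≤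
        2 * ∑ t ∈ Finset.range T, X (t + 1) ω' + 8 * R * Real.log (2 / δ)} := by
  classical
  set g : ℕ → Ω → ℝ := fun t => μ[X (t + 1) | ℱ t] with hgdef
  show ENNReal.ofReal (1 - δ) ≤
      μ {ω' | ∑ t ∈ Finset.range T, g t ω' ≤
        2 * ∑ t ∈ Finset.range T, X (t + 1) ω' + 8 * R * Real.log (2 / δ)}
  set S : Set Ω := {ω' | ∑ t ∈ Finset.range T, g t ω' ≤
      2 * ∑ t ∈ Finset.range T, X (t + 1) ω' + 8 * R * Real.log (2 / δ)} with hSdef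
  have hgsm : ∀ t, StronglyMeasurable[ℱ t] (g t) := fun t => stronglyMeasurable_condExp
  have hXsm : ∀ t, StronglyMeasurable[ℱ t] (X t) := hadapted
  have hSmeas : MeasurableSet S := by
    apply measurableSet_le
    · exact Finset.measurable_sum _ fun t _ => ((hgsm t).mono (ℱ.le t)).measurable
    · exact ((Finset.measurable_sum _ fun t _ =>
        ((hXsm (t+1)).mono (ℱ.le (t+1))).measurable).const_mul 2).add_const _
  suffices h : μ Sᶜ ≤ ENNReal.ofReal δ by
    have h1 : μ S + μ Sᶜ = 1 := by
      rw [measure_add_measure_compl hSmeas]; exact measure_univ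
    have h2 : (1:ENNReal) - ENNReal.ofReal δ ≤ μ S := by
      rw [tsub_le_iff_right]
      calc (1:ENNReal) = μ S + μ Sᶜ := h1.symm
        _ ≤ μ S + ENNReal.ofReal δ := add_le_add (le_refl _) h
    calc ENNReal.ofReal (1 - δ) = ENNReal.ofReal 1 - ENNReal.ofReal δ :=
          ENNReal.ofReal_sub _ hδ.le
      _ = 1 - ENNReal.ofReal δ := by rw [ENNReal.ofReal_one]
      _ ≤ μ S := h2
  rcases le_or_gt 1 δ with hδ1 | hδ1
  · calc μ Sᶜ ≤ 1 := prob_le_one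
      _ = ENNReal.ofReal 1 := ENNReal.ofReal_one.symm
      _ ≤ ENNReal.ofReal δ := ENNReal.ofReal_le_ofReal hδ1
  rcases hR.eq_or_lt with hR0 | hR0
  · -- R = 0 : everything is zero
    have hX0 : ∀ t, X t = fun _ => (0:ℝ) := fun t => funext fun ω =>
      le_antisymm (by have := (hbdd t ω).2; rwa [← hR0] at this) ((hbdd t ω).1)
    have hg0 : ∀ t, g t = fun _ => (0:ℝ) := fun t => by
      rw [hgdef]; simp only [hX0 (t+1)]
      rw [show (fun _ : Ω => (0:ℝ)) = (0 : Ω → ℝ) from rfl, condExp_zero]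
    have hS : S = Set.univ := by
      ext ω
      simp only [hSdef, Set.mem_setOf_eq, Set.mem_univ, iff_true]
      rw [Finset.sum_eq_zero (fun t _ => by rw [hg0 t]),
        Finset.sum_eq_zero (fun t _ => by rw [hX0 (t+1)]), ← hR0]
      norm_num
    rw [hS, Set.compl_univ, measure_empty]
    exact zero_le
  -- main case : 0 < R, δ < 1
  set η : ℝ := (2*R)⁻¹ with hηdef
  have hη : 0 < η := by positivity
  have hXint : ∀ t, Integrable (X t) μ := fun t =>
    mf_integrable_of_bound ((hXsm t).mono (ℱ.le t)).aestronglyMeasurable R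
      (Filter.Eventually.of_forall fun ω =>
        abs_le.2 ⟨by linarith [(hbdd t ω).1], (hbdd t ω).2⟩)
  have hg_nonneg : ∀ t, (0:Ω → ℝ) ≤ᵐ[μ] g t := fun t =>
    condExp_nonneg (Filter.Eventually.of_forall fun ω => (hbdd (t+1) ω).1)
  have hg_leR : ∀ t, g t ≤ᵐ[μ] fun _ => R := fun t => by
    have h := condExp_mono (m := ℱ t) (hXint (t+1)) (integrable_const R)
      (Filter.Eventually.of_forall fun ω => (hbdd (t+1) ω).2)
    rwa [condExp_const (ℱ.le t)] at h
  set M : ℕ → Ω → ℝ :=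
    fun n ω => Real.exp (∑ t ∈ Finset.range n, (η * g t ω - 2 * η * X (t+1) ω)) with hMdef
  have hsum_sm : ∀ n, StronglyMeasurable[ℱ n]
      (fun ω => ∑ t ∈ Finset.range n, (η * g t ω - 2 * η * X (t+1) ω)) := by
    intro n
    have hrw : (fun ω => ∑ t ∈ Finset.range n, (η * g t ω - 2 * η * X (t+1) ω))
        = ∑ t ∈ Finset.range n, (fun ω => η * g t ω - 2 * η * X (t+1) ω) := by
      funext ω; rw [Finset.sum_apply]
    rw [hrw]
    refine Finset.stronglyMeasurable_sum _ fun t ht => ?_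
    have ht' := Finset.mem_range.1 ht
    exact (((hgsm t).mono (ℱ.mono ht'.le)).const_mul η).sub
      (((hXsm (t+1)).mono (ℱ.mono ht')).const_mul (2*η))
  have hM_sm : ∀ n, StronglyMeasurable[ℱ n] (M n) := fun n =>
    Real.continuous_exp.comp_stronglyMeasurable (hsum_sm n)
  have hM_pos : ∀ n ω, 0 < M n ω := fun n ω => Real.exp_pos _
  have hgae : ∀ᵐ ω ∂μ, ∀ t, 0 ≤ g t ω ∧ g t ω ≤ R :=
    ae_all_iff.2 fun t => ((hg_nonneg t).and (hg_leR t))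
  have hηR : η * R = 1/2 := by rw [hηdef]; field_simp
  have hterm_le : ∀ ω, (∀ t, 0 ≤ g t ω ∧ g t ω ≤ R) → ∀ t,
      η * g t ω - 2 * η * X (t+1) ω ≤ 2 := by
    intro ω hω t
    have h1 := (hω t).2
    have h2 := (hbdd (t+1) ω).1
    have h3 : η * g t ω ≤ η * R := mul_le_mul_of_nonneg_left h1 hη.le
    nlinarith [mul_nonneg (by positivity : (0:ℝ) ≤ 2*η) h2]
  have hM_bdd : ∀ n, ∀ᵐ ω ∂μ, |M n ω| ≤ Real.exp (2*n) := by
    intro n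
    filter_upwards [hgae] with ω hω
    rw [abs_of_pos (hM_pos n ω), hMdef]
    simp only
    rw [Real.exp_le_exp]
    calc ∑ t ∈ Finset.range n, (η * g t ω - 2 * η * X (t+1) ω)
        ≤ ∑ _t ∈ Finset.range n, (2:ℝ) :=
          Finset.sum_le_sum fun t _ => hterm_le ω hω t
      _ = 2*n := by simp [Finset.sum_const, Finset.card_range, mul_comm]
  have hM_int : ∀ n, Integrable (M n) μ := fun n =>
    mf_integrable_of_bound ((hM_sm n).mono (ℱ.le n)).aestronglyMeasurable _ (hM_bdd n)
  -- induction : ∫ M n ≤ 1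
  have hint_le : ∀ n, ∫ ω, M n ω ∂μ ≤ 1 := by
    intro n
    induction n with
    | zero =>
      simp only [hMdef, Finset.range_zero, Finset.sum_empty, Real.exp_zero]
      simp
    | succ n ih =>
      set Z : Ω → ℝ := fun ω => Real.exp (η * g n ω - 2 * η * X (n+1) ω) with hZdef
      have hMsucc : M (n+1) = fun ω => M n ω * Z ω := by
        funext ω
        simp only [hMdef, hZdef]
        rw [Finset.sum_range_succ, Real.exp_add]
      have hZ_pos : ∀ ω, 0 < Z ω := fun ω => Real.exp_pos _
      have hZ_sm : StronglyMeasurable[ℱ (n+1)] Z := by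
        apply Real.continuous_exp.comp_stronglyMeasurable
        exact (((hgsm n).mono (ℱ.mono n.le_succ)).const_mul η).sub
          ((hXsm (n+1)).const_mul (2*η))
      have hZ_bdd : ∀ᵐ ω ∂μ, |Z ω| ≤ Real.exp 2 := by
        filter_upwards [hgae] with ω hω
        rw [abs_of_pos (hZ_pos ω), hZdef]
        exact Real.exp_le_exp.2 (hterm_le ω hω n)
      have hZ_int : Integrable Z μ :=
        mf_integrable_of_bound ((hZ_sm.mono (ℱ.le (n+1))).aestronglyMeasurable) _ hZ_bdd
      -- conditional expectation of Z is ≤ 1 a.e.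
      have hexpX_int : Integrable (fun ω => Real.exp (-(2 * η * X (n+1) ω))) μ := by
        refine mf_integrable_of_bound ?_ 1 (Filter.Eventually.of_forall fun ω => ?_)
        · refine ((Real.continuous_exp.comp_stronglyMeasurable ?_).mono
            (ℱ.le (n+1))).aestronglyMeasurable
          exact ((hXsm (n+1)).const_mul (2*η)).neg
        · rw [abs_of_pos (Real.exp_pos _), show (1:ℝ) = Real.exp 0 by simp,
            Real.exp_le_exp]
          have := (hbdd (n+1) ω).1
          nlinarith
      have hEg_sm : StronglyMeasurable[ℱ n] (fun ω => Real.exp (η * g n ω)) :=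
        Real.continuous_exp.comp_stronglyMeasurable ((hgsm n).const_mul η)
      have hfactor : Z = (fun ω => Real.exp (η * g n ω)) *
          (fun ω => Real.exp (-(2 * η * X (n+1) ω))) := by
        funext ω
        simp only [Pi.mul_apply, hZdef]
        rw [← Real.exp_add]
        ring_nf
      have hpull : μ[Z|ℱ n] =ᵐ[μ] (fun ω => Real.exp (η * g n ω)) *
          μ[(fun ω => Real.exp (-(2 * η * X (n+1) ω)))|ℱ n] := by
        rw [hfactor]
        exact condExp_mul_of_stronglyMeasurable_left hEg_sm (hfactor ▸ hZ_int) hexpX_int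
      have hptwise : ∀ ω, Real.exp (-(2 * η * X (n+1) ω)) ≤ 1 - η * X (n+1) ω := by
        intro ω
        have hx0 := (hbdd (n+1) ω).1
        have hxR := (hbdd (n+1) ω).2
        have hu0 : 0 ≤ X (n+1) ω / R := div_nonneg hx0 hR
        have hu1 : X (n+1) ω / R ≤ 1 := (div_le_one hR0).2 hxR
        have := mf_exp_neg_le hu0 hu1
        have e1 : -(2 * η * X (n+1) ω) = -(X (n+1) ω / R) := by
          rw [hηdef]; field_simp
        have e2 : 1 - η * X (n+1) ω = 1 - (X (n+1) ω / R) / 2 := by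
          rw [hηdef]; field_simp
        rw [e1, e2]; exact this
      have hsub_int : Integrable (fun ω => 1 - η * X (n+1) ω) μ := by
        have : (fun ω => 1 - η * X (n+1) ω) = (fun _ => (1:ℝ)) - η • (X (n+1)) := by
          funext ω; simp [smul_eq_mul]
        rw [this]
        exact (integrable_const 1).sub ((hXint (n+1)).smul η)
      have hmono1 : μ[(fun ω => Real.exp (-(2 * η * X (n+1) ω)))|ℱ n] ≤ᵐ[μ]
          μ[(fun ω => 1 - η * X (n+1) ω)|ℱ n] :=
        condExp_mono hexpX_int hsub_int (Filter.Eventually.of_forall hptwise)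
      have hcond_sub : μ[(fun ω => 1 - η * X (n+1) ω)|ℱ n] =ᵐ[μ]
          fun ω => 1 - η * g n ω := by
        have hre : (fun ω => 1 - η * X (n+1) ω) = (fun _ => (1:ℝ)) - η • (X (n+1)) := by
          funext ω; simp [smul_eq_mul]
        rw [hre]
        have h1 := condExp_sub (m := ℱ n) (integrable_const (1:ℝ)) ((hXint (n+1)).smul η)
        have h2 := condExp_smul (m := ℱ n) (μ := μ) η (X (n+1))
        filter_upwards [h1, h2] with ω hω1 hω2
        rw [hω1]
        simp only [Pi.sub_apply, Pi.smul_apply, smul_eq_mul] at hω2 ⊢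
        rw [condExp_const (ℱ.le n), hω2, hgdef]
      have hZcond_le : μ[Z|ℱ n] ≤ᵐ[μ] fun _ => (1:ℝ) := by
        filter_upwards [hpull, hmono1, hcond_sub] with ω h1 h2 h3
        rw [h1]
        simp only [Pi.mul_apply]
        calc Real.exp (η * g n ω) * (μ[(fun ω => Real.exp (-(2 * η * X (n+1) ω)))|ℱ n]) ω
            ≤ Real.exp (η * g n ω) * (1 - η * g n ω) := by
              apply mul_le_mul_of_nonneg_left _ (Real.exp_nonneg _)
              rw [← h3]; exact h2
          _ ≤ 1 := mf_exp_mul_one_sub_le _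
      -- integral step
      have hpull2 : μ[(fun ω => M n ω * Z ω)|ℱ n] =ᵐ[μ]
          fun ω => M n ω * (μ[Z|ℱ n]) ω := by
        have hMZ : Integrable (M n * Z) μ := by
          refine (hM_int (n+1)).congr (Filter.EventuallyEq.of_eq ?_)
          rw [hMsucc]; rfl
        have := condExp_mul_of_stronglyMeasurable_left (hM_sm n) hMZ hZ_int
        filter_upwards [this] with ω hω
        exact hω
      have hintMZ : Integrable (fun ω => M n ω * (μ[Z|ℱ n]) ω) μ :=
        integrable_condExp.congr hpull2
      calc ∫ ω, M (n+1) ω ∂μ = ∫ ω, (μ[(fun ω => M n ω * Z ω)|ℱ n]) ω ∂μ := by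
            rw [hMsucc, integral_condExp (ℱ.le n)]
        _ = ∫ ω, M n ω * (μ[Z|ℱ n]) ω ∂μ := integral_congr_ae hpull2
        _ ≤ ∫ ω, M n ω ∂μ := by
            apply integral_mono_ae hintMZ (hM_int n)
            filter_upwards [hZcond_le] with ω hω
            have := mul_le_mul_of_nonneg_left hω (hM_pos n ω).le
            simpa using this
        _ ≤ 1 := ih
  -- Markov step
  set a : ℝ := (2/δ)^4 with hadef
  have ha : 0 < a := by positivity
  have hsub : Sᶜ ⊆ {ω | a ≤ M T ω} := by
    intro ω hω
    simp only [hSdef, Set.mem_compl_iff, Set.mem_setOf_eq, not_le] at hω ⊢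
    have hsum : ∑ t ∈ Finset.range T, (η * g t ω - 2 * η * X (t+1) ω)
        = η * ((∑ t ∈ Finset.range T, g t ω) - 2 * ∑ t ∈ Finset.range T, X (t+1) ω) := by
      rw [Finset.sum_sub_distrib, ← Finset.mul_sum, ← Finset.mul_sum]
      ring
    have hηc : η * (8 * R * Real.log (2/δ)) = 4 * Real.log (2/δ) := by
      rw [hηdef]; field_simp; ring
    have hgt : 4 * Real.log (2/δ) ≤
        ∑ t ∈ Finset.range T, (η * g t ω - 2 * η * X (t+1) ω) := by
      rw [hsum, ← hηc]
      apply mul_le_mul_of_nonneg_left _ hη.le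
      linarith
    have hae : a = Real.exp (4 * Real.log (2/δ)) := by
      rw [show (4:ℝ) * Real.log (2/δ) = ((4:ℕ):ℝ) * Real.log (2/δ) by norm_num,
        Real.exp_nat_mul, Real.exp_log (by positivity)]
    rw [hae, hMdef]
    exact Real.exp_le_exp.2 hgt
  have hmark := mul_meas_ge_le_integral_of_nonneg
    (Filter.Eventually.of_forall fun ω => (hM_pos T ω).le) (hM_int T) a
  have h5 : (μ {ω | a ≤ M T ω}).toReal ≤ 1/a := by
    rw [le_div_iff₀ ha]
    calc (μ {ω | a ≤ M T ω}).toReal * a = a * (μ {ω | a ≤ M T ω}).toReal := mul_comm _ _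
      _ ≤ ∫ ω, M T ω ∂μ := hmark
      _ ≤ 1 := hint_le T
  have h7 : 1/a ≤ δ := by
    have he : 1/a = δ^4/16 := by
      rw [hadef]; rw [div_pow]; rw [one_div_div]; ring_nf
    rw [he]
    have h3 : δ^3 ≤ 1 := pow_le_one₀ hδ.le hδ1.le
    nlinarith [mul_le_of_le_one_right hδ.le h3]
  have h6 : (μ Sᶜ).toReal ≤ δ := by
    calc (μ Sᶜ).toReal ≤ (μ {ω | a ≤ M T ω}).toReal :=
          ENNReal.toReal_mono (measure_ne_top _ _) (measure_mono hsub)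
      _ ≤ 1/a := h5
      _ ≤ δ := h7
  rw [← ENNReal.ofReal_toReal (measure_ne_top μ Sᶜ)]
  exact ENNReal.ofReal_le_ofReal h6
end

section
/- Suppose for each t ∈ [T], π^t satisfies a_t ≥ sup-value minus ε_opt, where a_t := E^{π^t}[w^t] and w^t(x|x',a') := P(x|x',a')/(Σ_{i<t} d^{π^i}(x) + P(x|x',a')), and suppose P(x|x',a') ≤ C·μ(x) for some μ ∈ Δ(X) and all (x',a',x). Then Σ_{t=1}^T a_t ≤ 4·C·log(2T), i.e., Σ_{t=1}^T Σ_{x',a'} d^{π^t}_{prev}(x',a')·Σ_x P(x|x',a')·[P(x|x',a')/(Σ_{i<t} d^{π^i}(x) + P(x|x',a'))] ≤ 4·C·log(2T). -/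
private lemma frac_le_one' {S p : ℝ} (hS : 0 ≤ S) (hp : 0 ≤ p) : p / (S + p) ≤ 1 :=
  div_le_one_of_le₀ (le_add_of_nonneg_left hS) (by linarith)

private lemma frac_mono' {S p q : ℝ} (hS : 0 ≤ S) (hp : 0 ≤ p) (hpq : p ≤ q) :
    p / (S + p) ≤ q / (S + q) := by
  rcases eq_or_lt_of_le hp with h | h
  · have hq : 0 ≤ q := le_trans hp hpq
    rw [← h, zero_div]
    exact div_nonneg hq (by linarith)
  · have hq : 0 < q := lt_of_lt_of_le h hpq
    rw [div_le_div_iff₀ (by linarith) (by linarith)]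
    nlinarith

private lemma div_le_log_sub' {u d : ℝ} (hu : 0 < u) (hd : 0 ≤ d) :
    d / (u + d) ≤ Real.log (u + d) - Real.log u := by
  have hv : 0 < u + d := by linarith
  have h1 : Real.log (u / (u + d)) ≤ u / (u + d) - 1 :=
    Real.log_le_sub_one_of_pos (by positivity)
  rw [Real.log_div hu.ne' hv.ne'] at h1
  have h2 : d / (u + d) = 1 - u / (u + d) := by field_simp; ring
  rw [h2]; linarith

private lemma aux_potential {X : Type*} (Dn : ℕ → X → ℝ) (μ : X → ℝ) (C : ℝ) (T : ℕ)
    (hT : 1 ≤ T) (hC : 0 < C) (hμ0 : ∀ x, 0 ≤ μ x) (hμsum : HasSum μ 1)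
    (hD0 : ∀ j x, 0 ≤ Dn j x) (hDle : ∀ j x, Dn j x ≤ C * μ x) :
    ∑ t ∈ Finset.range T, ∑' x, Dn t x *
        (C * μ x / (∑ j ∈ Finset.range t, Dn j x + C * μ x)) ≤
      2 * C * Real.log (2 * T) := by
  have hμs : Summable μ := hμsum.summable
  have hT' : (1:ℝ) ≤ T := by exact_mod_cast hT
  have hlog : 0 ≤ Real.log (2 * T) := Real.log_nonneg (by linarith)
  have hcnn : ∀ x, 0 ≤ C * μ x := fun x => mul_nonneg hC.le (hμ0 x)
  have hSnn : ∀ t x, 0 ≤ ∑ j ∈ Finset.range t, Dn j x :=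
    fun t x => Finset.sum_nonneg fun j _ => hD0 j x
  have hgnn : ∀ t x, 0 ≤ C * μ x / (∑ j ∈ Finset.range t, Dn j x + C * μ x) :=
    fun t x => div_nonneg (hcnn x) (by linarith [hSnn t x, hcnn x])
  have hg1 : ∀ t x, C * μ x / (∑ j ∈ Finset.range t, Dn j x + C * μ x) ≤ 1 :=
    fun t x => frac_le_one' (hSnn t x) (hcnn x)
  have htermnn : ∀ t x,
      0 ≤ Dn t x * (C * μ x / (∑ j ∈ Finset.range t, Dn j x + C * μ x)) :=
    fun t x => mul_nonneg (hD0 t x) (hgnn t x)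
  have htermle : ∀ t x,
      Dn t x * (C * μ x / (∑ j ∈ Finset.range t, Dn j x + C * μ x)) ≤ C * μ x := by
    intro t x
    calc Dn t x * (C * μ x / (∑ j ∈ Finset.range t, Dn j x + C * μ x))
        ≤ (C * μ x) * 1 := mul_le_mul (hDle t x) (hg1 t x) (hgnn t x) (hcnn x)
      _ = C * μ x := mul_one _
  have hsummable : ∀ t, Summable (fun x =>
      Dn t x * (C * μ x / (∑ j ∈ Finset.range t, Dn j x + C * μ x))) := by
    intro t
    exact Summable.of_nonneg_of_le (htermnn t) (htermle t) (hμs.mul_left C)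
  -- per-x bound
  have hperx : ∀ x, ∑ t ∈ Finset.range T,
      Dn t x * (C * μ x / (∑ j ∈ Finset.range t, Dn j x + C * μ x)) ≤
      (2 * C * Real.log (2 * T)) * μ x := by
    intro x
    rcases eq_or_lt_of_le (hμ0 x) with hμx | hμx
    · have hz : ∀ t, Dn t x = 0 := by
        intro t
        have := hDle t x
        have := hD0 t x
        nlinarith
      simp [hz, ← hμx]
    · set c : ℝ := C * μ x with hc
      have hcpos : 0 < c := mul_pos hC hμx
      set f : ℕ → ℝ := fun t => Real.log (∑ j ∈ Finset.range t, Dn j x + c) with hf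
      have hstep : ∀ t, Dn t x * (c / (∑ j ∈ Finset.range t, Dn j x + c)) ≤
          2 * c * (f (t + 1) - f t) := by
        intro t
        set S : ℝ := ∑ j ∈ Finset.range t, Dn j x with hS
        have hS0 : 0 ≤ S := hSnn t x
        have hupos : 0 < S + c := by linarith
        have hd : 0 ≤ Dn t x := hD0 t x
        have hdle : Dn t x ≤ c := hDle t x
        have h1 : Dn t x / (S + c) ≤ 2 * (Dn t x / (S + Dn t x + c)) := by
          rcases eq_or_lt_of_le hd with h0 | h0
          · rw [← h0]; simp
          · have hvpos : 0 < S + Dn t x + c := by linarith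
            have he : 2 * (Dn t x / (S + Dn t x + c)) = (2 * Dn t x) / (S + Dn t x + c) := by
              ring
            rw [he, div_le_div_iff₀ hupos hvpos]
            nlinarith
        have h2 : Dn t x / (S + Dn t x + c) ≤
            Real.log (S + Dn t x + c) - Real.log (S + c) := by
          have := div_le_log_sub' hupos hd
          have harr : S + c + Dn t x = S + Dn t x + c := by ring
          rwa [harr] at this
        have hfsucc : f (t + 1) = Real.log (S + Dn t x + c) := by
          rw [hf]
          simp only [Finset.sum_range_succ]
          rfl
        have hft : f t = Real.log (S + c) := rfl
        calc Dn t x * (c / (S + c)) = c * (Dn t x / (S + c)) := by ring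
          _ ≤ c * (2 * (Dn t x / (S + Dn t x + c))) :=
              mul_le_mul_of_nonneg_left h1 hcpos.le
          _ ≤ c * (2 * (Real.log (S + Dn t x + c) - Real.log (S + c))) :=
              mul_le_mul_of_nonneg_left (by linarith) hcpos.le
          _ = 2 * c * (f (t + 1) - f t) := by rw [hfsucc, hft]; ring
      calc ∑ t ∈ Finset.range T,
            Dn t x * (C * μ x / (∑ j ∈ Finset.range t, Dn j x + C * μ x))
          ≤ ∑ t ∈ Finset.range T, 2 * c * (f (t + 1) - f t) :=
            Finset.sum_le_sum fun t _ => hstep t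
        _ = 2 * c * (f T - f 0) := by
            rw [← Finset.mul_sum, Finset.sum_range_sub]
        _ ≤ 2 * c * Real.log (2 * T) := by
            apply mul_le_mul_of_nonneg_left _ (by linarith)
            have hf0 : f 0 = Real.log c := by simp [hf]
            have hST : ∑ j ∈ Finset.range T, Dn j x ≤ T * c := by
              calc ∑ j ∈ Finset.range T, Dn j x ≤ ∑ j ∈ Finset.range T, c :=
                    Finset.sum_le_sum fun j _ => hDle j x
                _ = T * c := by rw [Finset.sum_const, Finset.card_range, nsmul_eq_mul]
            have hfT : f T ≤ Real.log (2 * T * c) := by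
              apply Real.log_le_log (by linarith [hSnn T x])
              have : (T : ℝ) * c + c ≤ 2 * T * c := by nlinarith
              linarith [hST]
            have hlogmul : Real.log (2 * T * c) = Real.log (2 * T) + Real.log c := by
              rw [Real.log_mul (by positivity) hcpos.ne']
            linarith [hfT, hf0, hlogmul]
        _ = 2 * C * Real.log (2 * T) * μ x := by rw [hc]; ring
  -- combine
  rw [← Summable.tsum_finsetSum fun t _ => hsummable t]
  have hLHS : Summable (fun x => ∑ t ∈ Finset.range T,
      Dn t x * (C * μ x / (∑ j ∈ Finset.range t, Dn j x + C * μ x))) :=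
    summable_sum fun t _ => hsummable t
  calc ∑' x, ∑ t ∈ Finset.range T,
        Dn t x * (C * μ x / (∑ j ∈ Finset.range t, Dn j x + C * μ x))
      ≤ ∑' x, (2 * C * Real.log (2 * T)) * μ x :=
        Summable.tsum_le_tsum hperx hLHS (hμs.mul_left _)
    _ = (2 * C * Real.log (2 * T)) * 1 := by rw [tsum_mul_left, hμsum.tsum_eq]
    _ = 2 * C * Real.log (2 * T) := mul_one _

/-- Pushforward elliptic potential bound (eq. pushforward_potential in the proof of
Theorem pushforward_optimization). -/
theorem pushforward_potential {XA X ι : Type*} [Countable XA] [Countable X]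
    (P : XA → X → ℝ) (μ : X → ℝ) (C εopt : ℝ) (T : ℕ)
    (dd : ι → XA → ℝ) (π : ℕ → ι)
    (hP0 : ∀ xa x, 0 ≤ P xa x) (hPsum : ∀ xa, HasSum (P xa) 1)
    (hμ0 : ∀ x, 0 ≤ μ x) (hμsum : HasSum μ 1)
    (hC : 0 < C) (hpush : ∀ xa x, P xa x ≤ C * μ x)
    (hd0 : ∀ i xa, 0 ≤ dd i xa) (hdsum : ∀ i, HasSum (dd i) 1)
    (hopt : ∀ t < T, ∀ i : ι,
      ∑' xa, dd i xa * ∑' x, P xa x *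
          (P xa x / (∑ j ∈ Finset.range t, (∑' xa', dd (π j) xa' * P xa' x) + P xa x)) ≤
        (∑' xa, dd (π t) xa * ∑' x, P xa x *
          (P xa x / (∑ j ∈ Finset.range t, (∑' xa', dd (π j) xa' * P xa' x) + P xa x)))
          + εopt) :
    ∑ t ∈ Finset.range T, ∑' xa, dd (π t) xa * ∑' x, P xa x *
        (P xa x / (∑ j ∈ Finset.range t, (∑' xa', dd (π j) xa' * P xa' x) + P xa x)) ≤
      4 * C * Real.log (2 * T) := by
  rcases Nat.eq_zero_or_pos T with rfl | hT
  · simp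
  have hPs : ∀ xa, Summable (P xa) := fun xa => (hPsum xa).summable
  have hds : ∀ i, Summable (dd i) := fun i => (hdsum i).summable
  have hμs : Summable μ := hμsum.summable
  have hcnn : ∀ x, 0 ≤ C * μ x := fun x => mul_nonneg hC.le (hμ0 x)
  -- the pushforward occupancy
  set Dn : ℕ → X → ℝ := fun j x => ∑' xa, dd (π j) xa * P xa x with hDn
  have hDn0 : ∀ j x, 0 ≤ Dn j x :=
    fun j x => tsum_nonneg fun xa => mul_nonneg (hd0 _ xa) (hP0 xa x)
  have hDnsummand : ∀ i x, Summable (fun xa => dd i xa * P xa x) := by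
    intro i x
    apply Summable.of_nonneg_of_le (fun xa => mul_nonneg (hd0 i xa) (hP0 xa x))
      (fun xa => mul_le_mul_of_nonneg_left (hpush xa x) (hd0 i xa))
      ((hds i).mul_right (C * μ x))
  have hDnle : ∀ j x, Dn j x ≤ C * μ x := by
    intro j x
    calc Dn j x ≤ ∑' xa, dd (π j) xa * (C * μ x) :=
          Summable.tsum_le_tsum (fun xa => mul_le_mul_of_nonneg_left (hpush xa x) (hd0 _ xa))
            (hDnsummand _ x) ((hds _).mul_right _)
      _ = (∑' xa, dd (π j) xa) * (C * μ x) := tsum_mul_right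
      _ = C * μ x := by rw [(hdsum _).tsum_eq, one_mul]
  have hSnn : ∀ t x, 0 ≤ ∑ j ∈ Finset.range t, Dn j x :=
    fun t x => Finset.sum_nonneg fun j _ => hDn0 j x
  -- per-round bound: value at t is at most the pushforward version
  have hstep : ∀ t, ∑' xa, dd (π t) xa * ∑' x, P xa x *
        (P xa x / (∑ j ∈ Finset.range t, Dn j x + P xa x)) ≤
      ∑' x, Dn t x * (C * μ x / (∑ j ∈ Finset.range t, Dn j x + C * μ x)) := by
    intro t
    set g : X → ℝ := fun x => C * μ x / (∑ j ∈ Finset.range t, Dn j x + C * μ x) with hg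
    have hgnn : ∀ x, 0 ≤ g x := fun x => div_nonneg (hcnn x) (by
      have := hSnn t x; have := hcnn x; linarith)
    have hg1 : ∀ x, g x ≤ 1 := fun x => frac_le_one' (hSnn t x) (hcnn x)
    have hfracnn : ∀ xa x,
        0 ≤ P xa x / (∑ j ∈ Finset.range t, Dn j x + P xa x) := fun xa x =>
      div_nonneg (hP0 xa x) (by have := hSnn t x; have := hP0 xa x; linarith)
    have hfrac1 : ∀ xa x,
        P xa x / (∑ j ∈ Finset.range t, Dn j x + P xa x) ≤ 1 := fun xa x =>
      frac_le_one' (hSnn t x) (hP0 xa x)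
    -- inner summabilities
    have hinnA : ∀ xa, Summable (fun x => P xa x *
        (P xa x / (∑ j ∈ Finset.range t, Dn j x + P xa x))) := fun xa =>
      Summable.of_nonneg_of_le (fun x => mul_nonneg (hP0 xa x) (hfracnn xa x))
        (fun x => by
          calc P xa x * (P xa x / (∑ j ∈ Finset.range t, Dn j x + P xa x))
              ≤ P xa x * 1 := mul_le_mul_of_nonneg_left (hfrac1 xa x) (hP0 xa x)
            _ = P xa x := mul_one _) (hPs xa)
    have hinnB : ∀ xa, Summable (fun x => P xa x * g x) := fun xa =>
      Summable.of_nonneg_of_le (fun x => mul_nonneg (hP0 xa x) (hgnn x))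
        (fun x => by
          calc P xa x * g x ≤ P xa x * 1 :=
              mul_le_mul_of_nonneg_left (hg1 x) (hP0 xa x)
            _ = P xa x := mul_one _) (hPs xa)
    have hinnAle1 : ∀ xa, ∑' x, P xa x *
        (P xa x / (∑ j ∈ Finset.range t, Dn j x + P xa x)) ≤ 1 := by
      intro xa
      calc ∑' x, P xa x * (P xa x / (∑ j ∈ Finset.range t, Dn j x + P xa x))
          ≤ ∑' x, P xa x := Summable.tsum_le_tsum (fun x => by
            calc P xa x * (P xa x / (∑ j ∈ Finset.range t, Dn j x + P xa x))
                ≤ P xa x * 1 := mul_le_mul_of_nonneg_left (hfrac1 xa x) (hP0 xa x)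
              _ = P xa x := mul_one _) (hinnA xa) (hPs xa)
        _ = 1 := (hPsum xa).tsum_eq
    have hinnBle1 : ∀ xa, ∑' x, P xa x * g x ≤ 1 := by
      intro xa
      calc ∑' x, P xa x * g x
          ≤ ∑' x, P xa x := Summable.tsum_le_tsum (fun x => by
            calc P xa x * g x ≤ P xa x * 1 :=
                mul_le_mul_of_nonneg_left (hg1 x) (hP0 xa x)
              _ = P xa x := mul_one _) (hinnB xa) (hPs xa)
        _ = 1 := (hPsum xa).tsum_eq
    have hinnAnn : ∀ xa, 0 ≤ ∑' x, P xa x *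
        (P xa x / (∑ j ∈ Finset.range t, Dn j x + P xa x)) := fun xa =>
      tsum_nonneg fun x => mul_nonneg (hP0 xa x) (hfracnn xa x)
    have hinnBnn : ∀ xa, 0 ≤ ∑' x, P xa x * g x := fun xa =>
      tsum_nonneg fun x => mul_nonneg (hP0 xa x) (hgnn x)
    -- outer summabilities
    have houtA : Summable (fun xa => dd (π t) xa * ∑' x, P xa x *
        (P xa x / (∑ j ∈ Finset.range t, Dn j x + P xa x))) :=
      Summable.of_nonneg_of_le (fun xa => mul_nonneg (hd0 _ xa) (hinnAnn xa))
        (fun xa => by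
          calc dd (π t) xa * ∑' x, P xa x *
              (P xa x / (∑ j ∈ Finset.range t, Dn j x + P xa x))
              ≤ dd (π t) xa * 1 :=
                mul_le_mul_of_nonneg_left (hinnAle1 xa) (hd0 _ xa)
            _ = dd (π t) xa := mul_one _) (hds _)
    have houtB : Summable (fun xa => dd (π t) xa * ∑' x, P xa x * g x) :=
      Summable.of_nonneg_of_le (fun xa => mul_nonneg (hd0 _ xa) (hinnBnn xa))
        (fun xa => by
          calc dd (π t) xa * ∑' x, P xa x * g x
              ≤ dd (π t) xa * 1 :=
                mul_le_mul_of_nonneg_left (hinnBle1 xa) (hd0 _ xa)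
            _ = dd (π t) xa := mul_one _) (hds _)
    -- step 1: replace P by C μ in the fraction
    have h1 : ∑' xa, dd (π t) xa * ∑' x, P xa x *
          (P xa x / (∑ j ∈ Finset.range t, Dn j x + P xa x)) ≤
        ∑' xa, dd (π t) xa * ∑' x, P xa x * g x := by
      apply Summable.tsum_le_tsum _ houtA houtB
      intro xa
      apply mul_le_mul_of_nonneg_left _ (hd0 _ xa)
      apply Summable.tsum_le_tsum _ (hinnA xa) (hinnB xa)
      intro x
      exact mul_le_mul_of_nonneg_left
        (frac_mono' (hSnn t x) (hP0 xa x) (hpush xa x)) (hP0 xa x)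
    -- step 2: swap the order of summation
    have hFnn : ∀ p : XA × X, 0 ≤ dd (π t) p.1 * (P p.1 p.2 * g p.2) := fun p =>
      mul_nonneg (hd0 _ p.1) (mul_nonneg (hP0 p.1 p.2) (hgnn p.2))
    have hF1 : ∀ xa, Summable (fun x => dd (π t) xa * (P xa x * g x)) :=
      fun xa => (hinnB xa).mul_left _
    have hF2 : Summable (fun xa => ∑' x, dd (π t) xa * (P xa x * g x)) := by
      have : ∀ xa, ∑' x, dd (π t) xa * (P xa x * g x) =
          dd (π t) xa * ∑' x, P xa x * g x := fun xa => tsum_mul_left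
      rw [funext this]
      exact houtB
    have hF : Summable (fun p : XA × X => dd (π t) p.1 * (P p.1 p.2 * g p.2)) :=
      (summable_prod_of_nonneg hFnn).2 ⟨hF1, hF2⟩
    have hFcol : ∀ x, Summable (fun xa => dd (π t) xa * (P xa x * g x)) := by
      intro x
      apply Summable.of_nonneg_of_le
        (fun xa => mul_nonneg (hd0 _ xa) (mul_nonneg (hP0 xa x) (hgnn x)))
        (fun xa => ?_) ((hDnsummand (π t) x).mul_right (g x))
      calc dd (π t) xa * (P xa x * g x) = dd (π t) xa * P xa x * g x := by ring
        _ ≤ dd (π t) xa * P xa x * g x := le_refl _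
    have h2 : ∑' xa, dd (π t) xa * ∑' x, P xa x * g x =
        ∑' x, Dn t x * g x := by
      have e1 : ∑' xa, dd (π t) xa * ∑' x, P xa x * g x =
          ∑' (xa) (x), dd (π t) xa * (P xa x * g x) := by
        apply tsum_congr
        intro xa
        rw [tsum_mul_left]
      have e2 : ∑' (x) (xa), dd (π t) xa * (P xa x * g x) =
          ∑' (xa) (x), dd (π t) xa * (P xa x * g x) :=
        Summable.tsum_comm' hF hF1 hFcol
      have e3 : ∀ x, ∑' xa, dd (π t) xa * (P xa x * g x) = Dn t x * g x := by
        intro x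
        have : ∀ xa, dd (π t) xa * (P xa x * g x) = dd (π t) xa * P xa x * g x :=
          fun xa => by ring
        rw [funext this, tsum_mul_right]
      rw [e1, ← e2, tsum_congr e3]
    calc ∑' xa, dd (π t) xa * ∑' x, P xa x *
          (P xa x / (∑ j ∈ Finset.range t, Dn j x + P xa x))
        ≤ ∑' xa, dd (π t) xa * ∑' x, P xa x * g x := h1
      _ = ∑' x, Dn t x * g x := h2
  calc ∑ t ∈ Finset.range T, ∑' xa, dd (π t) xa * ∑' x, P xa x *
        (P xa x / (∑ j ∈ Finset.range t, Dn j x + P xa x))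
      ≤ ∑ t ∈ Finset.range T, ∑' x, Dn t x *
          (C * μ x / (∑ j ∈ Finset.range t, Dn j x + C * μ x)) :=
        Finset.sum_le_sum fun t _ => hstep t
    _ ≤ 2 * C * Real.log (2 * T) :=
        aux_potential Dn μ C T hT hC hμ0 hμsum hDn0 hDnle
    _ ≤ 4 * C * Real.log (2 * T) := by
        have hT' : (1:ℝ) ≤ T := by exact_mod_cast hT
        have hlog : 0 ≤ Real.log (2 * T) := Real.log_nonneg (by linarith)
        nlinarith
end
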